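/- arXiv:1607.01362 — 6 statements merged into one kernel-verified Lean document; each statement's English description precedes it below -/
import Mathlib

section
/- Let X and Y be real Banach spaces, A : X → Y a bounded linear operator, and ε > 0. Let (z*_λ)_{λ∈Q} be a net in Y* (indexed by a directed preordered set Q) that converges to 0 in the w*-topology and satisfies ‖A* z*_λ‖ ≥ ε for every λ ∈ Q. Then for every η > 0, every weakly open set U ⊆ X containing 0, every w*-open set V ⊆ Y* containing 0, and every λ₀ ∈ Q, there exist x ∈ B_X ∩ U and λ ∈ Q such that λ₀ ≤ λ, z*_λ ∈ V, and z*_λ(A x) > ε/2 − η. -/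
/-! The functionals `w_λ = A* z_λ` have norm `≥ ε` and tend to `0` pointwise, so indices `λ_n`
and points `x_n ∈ B_X` can be chosen inductively with
`w_{λ_n}(x_n) > ε - η` and `|w_{λ_n}(x_m)| < η` for `m < n`. The weak neighbourhood `U`
contains `{x : |f(x)| < δ, f ∈ s}` for a finite `s ⊆ X*`, and the bounded sequence
`(f(x_n))_{f ∈ s}` in `ℝ^s` has two terms `m < n` at distance `< δ`; then
`x = (x_n - x_m)/2 ∈ B_X ∩ U` and `w_{λ_n}(x) > (ε - 2η)/2`. -/

open Filter Topology Pointwise NormedSpace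

noncomputable section

variable {X Y : Type*} [NormedAddCommGroup X] [NormedSpace ℝ X] [CompleteSpace X]
  [NormedAddCommGroup Y] [NormedSpace ℝ Y] [CompleteSpace Y]

/-- The adjoint `A* : Y* → X*` of a bounded linear operator, `(A* g)(x) = g (A x)`. -/
def opAdjoint (A : X →L[ℝ] Y) : StrongDual ℝ Y →L[ℝ] StrongDual ℝ X :=
  (ContinuousLinearMap.compSL X Y ℝ (RingHom.id ℝ) (RingHom.id ℝ)).flip A

/-- A set of functionals is weak-star open (open in `σ(E*, E)`). -/
def IsWeakStarOpen {E : Type*} [NormedAddCommGroup E] [NormedSpace ℝ E]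
    (V : Set (StrongDual ℝ E)) : Prop :=
  IsOpen (StrongDual.toWeakDual '' V)

/-- A set is weakly open (open in the weak topology `σ(E, E*)`). -/
def IsWeaklyOpen {E : Type*} [NormedAddCommGroup E] [NormedSpace ℝ E] (U : Set E) : Prop :=
  IsOpen (toWeakSpace ℝ E '' U)

theorem Metric.exists_lt_dist_lt_of_isBounded_range {E : Type*} [PseudoMetricSpace E]
    [ProperSpace E] {u : ℕ → E} (hu : Bornology.IsBounded (Set.range u)) {δ : ℝ} (hδ : 0 < δ) :
    ∃ m n, m < n ∧ dist (u m) (u n) < δ := by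
  obtain ⟨_, -, φ, hφ, hlim⟩ := tendsto_subseq_of_bounded hu (Set.mem_range_self)
  obtain ⟨N, hN⟩ := Metric.cauchySeq_iff'.mp hlim.cauchySeq δ hδ
  exact ⟨φ N, φ (N + 1), hφ N.lt_succ_self, by simpa [dist_comm] using hN (N + 1) N.le_succ⟩

section Dual

variable {E : Type*} [NormedAddCommGroup E] [NormedSpace ℝ E]

theorem IsWeaklyOpen.exists_finset_of_zero_mem {U : Set E} (hU : IsWeaklyOpen U)
    (hU0 : (0 : E) ∈ U) :
    ∃ (s : Finset (StrongDual ℝ E)) (δ : ℝ), 0 < δ ∧ ∀ x, (∀ f ∈ s, |f x| < δ) → x ∈ U := by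
  have hmem : toWeakSpace ℝ E '' U ∈ 𝓝 (0 : WeakSpace ℝ E) :=
    hU.mem_nhds ⟨0, hU0, map_zero _⟩
  obtain ⟨_, hB, hBU⟩ := (LinearMap.hasBasis_weakBilin _).mem_iff.mp hmem
  obtain ⟨s, δ, hδ, rfl⟩ := SeminormFamily.basisSets_iff _ |>.mp hB
  refine ⟨s, δ, hδ, fun x hx => ?_⟩
  have hxB : toWeakSpace ℝ E x ∈ (s.sup (topDualPairing ℝ E).flip.toSeminormFamily).ball 0 δ :=
    (Seminorm.mem_ball_zero _).mpr <| Seminorm.finset_sup_apply_lt hδ hx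
  obtain ⟨y, hyU, hyx⟩ := hBU hxB
  rwa [(toWeakSpace ℝ E).injective hyx] at hyU

theorem IsWeakStarOpen.eventually_mem_of_tendsto_apply {V : Set (StrongDual ℝ E)}
    (hV : IsWeakStarOpen V) (hV0 : (0 : StrongDual ℝ E) ∈ V) {ι : Type*} {l : Filter ι}
    {z : ι → StrongDual ℝ E} (hz : ∀ x, Tendsto (fun i => z i x) l (𝓝 0)) :
    ∀ᶠ i in l, z i ∈ V := by
  have hlim : Tendsto (fun i => StrongDual.toWeakDual (z i)) l (𝓝 0) :=
    tendsto_iff_forall_eval_tendsto_topDualPairing.mpr hz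
  filter_upwards [hlim (hV.mem_nhds ⟨0, hV0, map_zero _⟩)] with i ⟨g, hgV, hg⟩
  rwa [StrongDual.toWeakDual.injective hg] at hgV

theorem StrongDual.exists_norm_le_one_lt_apply (f : StrongDual ℝ E) {c : ℝ} (hc : c < ‖f‖) :
    ∃ x, ‖x‖ ≤ 1 ∧ c < f x := by
  obtain ⟨x, hx1, hx⟩ := f.exists_lt_apply_of_lt_opNorm hc
  rcases lt_abs.mp hx with h | h
  · exact ⟨x, hx1.le, h⟩
  · exact ⟨-x, by simpa using hx1.le, by simpa using h⟩

variable {ι : Type*} {l : Filter ι} [l.NeBot] {w : ι → StrongDual ℝ E}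

theorem exists_seq_of_tendsto_apply_zero (hw : ∀ x, Tendsto (fun i => w i x) l (𝓝 0))
    {P : ι → Prop} (hP : ∀ᶠ i in l, P i) {c η : ℝ} (hη : 0 < η) (hc : ∀ᶠ i in l, c < ‖w i‖) :
    ∃ (i : ℕ → ι) (x : ℕ → E), (∀ n, ‖x n‖ ≤ 1 ∧ P (i n) ∧ c < w (i n) (x n)) ∧
      ∀ m n, m < n → |w (i n) (x m)| < η := by
  obtain ⟨f, hf, hr⟩ := exists_seq_of_forall_finset_exists
    (fun p : ι × E => ‖p.2‖ ≤ 1 ∧ P p.1 ∧ c < w p.1 p.2) (fun p q => |w q.1 p.2| < η)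
    fun S _ => by
      have hS : ∀ᶠ i in l, ∀ p ∈ S, |w i p.2| < η :=
        (eventually_all_finset S).mpr fun p _ => (Metric.tendsto_nhds.mp (hw p.2) η hη).mono
          fun i hi => by rwa [Real.dist_0_eq_abs] at hi
      obtain ⟨i, hiP, hic, hiS⟩ := (hP.and (hc.and hS)).exists
      obtain ⟨x, hx1, hx⟩ := (w i).exists_norm_le_one_lt_apply hic
      exact ⟨(i, x), ⟨hx1, hiP, hx⟩, hiS⟩
  exact ⟨fun n => (f n).1, fun n => (f n).2, hf, hr⟩

theorem exists_mem_closedBall_inter_half_sub_lt_apply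
    (hw : ∀ x, Tendsto (fun i => w i x) l (𝓝 0)) {P : ι → Prop} (hP : ∀ᶠ i in l, P i)
    {ε η : ℝ} (hη : 0 < η) (hε : ∀ᶠ i in l, ε ≤ ‖w i‖) {U : Set E} (hU : IsWeaklyOpen U)
    (hU0 : (0 : E) ∈ U) :
    ∃ x ∈ Metric.closedBall (0 : E) 1 ∩ U, ∃ i, P i ∧ ε / 2 - η < w i x := by
  obtain ⟨s, δ, hδ, hsU⟩ := hU.exists_finset_of_zero_mem hU0
  obtain ⟨i, x, hx, hsmall⟩ :=
    exists_seq_of_tendsto_apply_zero (c := ε - η) hw hP hη (hε.mono fun i hi => by linarith)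
  let T : E →L[ℝ] (s → ℝ) := ContinuousLinearMap.pi fun g => g.1
  have hT : Bornology.IsBounded (Set.range (T ∘ x)) :=
    isBounded_iff_forall_norm_le.mpr ⟨‖T‖ * 1, by
      rintro _ ⟨n, rfl⟩
      exact T.le_opNorm_of_le (hx n).1⟩
  obtain ⟨m, n, hmn, hdist⟩ := Metric.exists_lt_dist_lt_of_isBounded_range hT hδ
  refine ⟨(2⁻¹ : ℝ) • (x n - x m), ⟨mem_closedBall_zero_iff.mpr ?_, hsU _ fun g hg => ?_⟩,
    i n, (hx n).2.1, ?_⟩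
  · calc ‖(2⁻¹ : ℝ) • (x n - x m)‖ = 2⁻¹ * ‖x n - x m‖ := by norm_num [norm_smul]
      _ ≤ 2⁻¹ * (‖x n‖ + ‖x m‖) := by gcongr; exact norm_sub_le _ _
      _ ≤ 1 := by linarith [(hx n).1, (hx m).1]
  · have hgmn : |g (x m) - g (x n)| < δ :=
      (dist_le_pi_dist (T (x m)) (T (x n)) ⟨g, hg⟩).trans_lt hdist
    calc |g ((2⁻¹ : ℝ) • (x n - x m))| = 2⁻¹ * |g (x m) - g (x n)| := by
          norm_num [abs_mul, abs_sub_comm]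
      _ < δ := by linarith [abs_nonneg (g (x m) - g (x n))]
  · have hsmall_mn := abs_lt.mp (hsmall m n hmn)
    calc ε / 2 - η < 2⁻¹ * (w (i n) (x n) - w (i n) (x m)) := by linarith [(hx n).2.2]
      _ = w (i n) ((2⁻¹ : ℝ) • (x n - x m)) := by simp

end Dual

theorem statement0_general (A : X →L[ℝ] Y) (ε : ℝ)
    {ι : Type*} [Preorder ι] [IsDirected ι (· ≤ ·)] [Nonempty ι]
    (z : ι → StrongDual ℝ Y)
    (hz_null : ∀ y : Y, Tendsto (fun i => z i y) atTop (𝓝 0))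
    (hz_big : ∀ i, ε ≤ ‖opAdjoint A (z i)‖) :
    ∀ η : ℝ, 0 < η → ∀ U : Set X, IsWeaklyOpen U → (0 : X) ∈ U →
      ∀ V : Set (StrongDual ℝ Y), IsWeakStarOpen V → (0 : StrongDual ℝ Y) ∈ V →
        ∀ i₀ : ι, ∃ x ∈ Metric.closedBall (0 : X) 1 ∩ U, ∃ i : ι,
          i₀ ≤ i ∧ z i ∈ V ∧ ε / 2 - η < z i (A x) := by
  intro η hη U hU hU0 V hV hV0 i₀
  have hzV : ∀ᶠ i in atTop, z i ∈ V := hV.eventually_mem_of_tendsto_apply hV0 hz_null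
  obtain ⟨x, hx, i, ⟨hi₀, hiV⟩, hi⟩ :=
    exists_mem_closedBall_inter_half_sub_lt_apply (w := fun i => opAdjoint A (z i))
      (fun x => hz_null (A x)) ((eventually_ge_atTop i₀).and hzV) hη (.of_forall hz_big) hU hU0
  exact ⟨x, hx, i, hi₀, hiV, hi⟩

/-- Lemma 3.3 of the paper: if `(z_λ)` is a w*-null net in `Y*` with
`‖A* z_λ‖ ≥ ε`, then for every `η > 0`, every weakly open `U ∋ 0`, every w*-open `V ∋ 0`
and every `λ₀` there are `x ∈ B_X ∩ U` and `λ ≥ λ₀` with `z_λ ∈ V` and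
`z_λ(Ax) > ε/2 − η`. -/
theorem statement0 (A : X →L[ℝ] Y) (ε : ℝ) (hε : 0 < ε)
    {ι : Type*} [Preorder ι] [IsDirected ι (· ≤ ·)] [Nonempty ι]
    (z : ι → StrongDual ℝ Y)
    (hz_null : ∀ y : Y, Tendsto (fun i => z i y) atTop (𝓝 0))
    (hz_big : ∀ i, ε ≤ ‖opAdjoint A (z i)‖) :
    ∀ η : ℝ, 0 < η → ∀ U : Set X, IsWeaklyOpen U → (0 : X) ∈ U →
      ∀ V : Set (StrongDual ℝ Y), IsWeakStarOpen V → (0 : StrongDual ℝ Y) ∈ V →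
        ∀ i₀ : ι, ∃ x ∈ Metric.closedBall (0 : X) 1 ∩ U, ∃ i : ι,
          i₀ ≤ i ∧ z i ∈ V ∧ ε / 2 - η < z i (A x) :=
  statement0_general A ε z hz_null hz_big
end
end

section
/- Let X and Y be real Banach spaces and A : X → Y a bounded linear operator with ‖A‖ ≤ 1. Fix D ≥ 1 and β ∈ (0,1) such that for every x ∈ B_X and every sequence (x_k) ⊆ B_X with inf_{j≠k} ‖A x_j − A x_k‖ ≥ 2/D, there exists k with ‖x + x_k‖ ≤ 2(1 − β). If n ≥ 1 and f : T_{2^n} → X satisfies d(s,t)/D ≤ ‖A f(s) − A f(t)‖ ≤ ‖f(s) − f(t)‖ ≤ d(s,t) for all s, t ∈ T_{2^n}, then D ≥ (1 − β)^{−n}. (Consequently, if A has property (β), the family of trees T_m does not factor through A with any uniform distortion.) -/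
/-! By induction on `i`, every vertex `s` of the tree has a descendant at depth
`2 ^ i` below it whose image under `f` lies within `(2 (1 - β)) ^ i` of `f s`: concatenate two
such paths of length `2 ^ i`, choosing the second among the pairwise `2 ^ (i + 1)`-apart branches
below the children of the midpoint, so that property (β), rescaled by `(2 (1 - β)) ^ i`, applies.
At `i = n` from the root, the lower Lipschitz bound through `A` gives
`2 ^ n / D ≤ (2 (1 - β)) ^ n`. -/

open Filter Topology Pointwise NormedSpace

noncomputable section

variable {X Y : Type*} [NormedAddCommGroup X] [NormedSpace ℝ X] [CompleteSpace X]
  [NormedAddCommGroup Y] [NormedSpace ℝ Y] [CompleteSpace Y]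

/-- Longest common initial segment (prefix) of two finite sequences. -/
def lcp : List ℕ → List ℕ → List ℕ
  | a :: s, b :: t => if a = b then a :: lcp s t else []
  | _, _ => []

/-- The graph distance on the tree `T` of all finite sequences of naturals:
`d(s,t) = |s| + |t| - 2|u|`, `u` the longest common initial segment. -/
def treeDist (s t : List ℕ) : ℕ := s.length + t.length - 2 * (lcp s t).length

lemma lcp_self_append (s l : List ℕ) : lcp s (s ++ l) = s := by
  induction s with
  | nil => cases l <;> rfl
  | cons a s ih => simp [lcp, ih]

lemma lcp_append_cons_of_ne (v : List ℕ) {a b : ℕ} (h : a ≠ b) (p q : List ℕ) :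
    lcp (v ++ a :: p) (v ++ b :: q) = v := by
  induction v with
  | nil => simp [lcp, h]
  | cons c v ih => simp [lcp, ih]

lemma treeDist_self_append (s l : List ℕ) : treeDist s (s ++ l) = l.length := by
  rw [treeDist, lcp_self_append, List.length_append]
  omega

lemma treeDist_append_cons_of_ne (v : List ℕ) {a b : ℕ} (h : a ≠ b) (p q : List ℕ) :
    treeDist (v ++ a :: p) (v ++ b :: q) = p.length + q.length + 2 := by
  rw [treeDist, lcp_append_cons_of_ne v h p q, List.length_append, List.length_append,
    List.length_cons, List.length_cons]
  omega

section BetaEstimate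

variable {E F : Type*} [NormedAddCommGroup E] [NormedSpace ℝ E]
  [NormedAddCommGroup F] [NormedSpace ℝ F]

def BetaEstimate (A : E →L[ℝ] F) (ε β : ℝ) : Prop :=
  ∀ x : E, ‖x‖ ≤ 1 → ∀ xs : ℕ → E, (∀ k, ‖xs k‖ ≤ 1) →
    (∀ j k, j ≠ k → ε ≤ ‖A (xs j) - A (xs k)‖) → ∃ k, ‖x + xs k‖ ≤ 2 * (1 - β)

lemma BetaEstimate.exists_norm_sub_le {A : E →L[ℝ] F} {ε β : ℝ} (hA : BetaEstimate A ε β)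
    {r : ℝ} (hr : 0 < r) (p q : E) (ys : ℕ → E) (hq : ‖q - p‖ ≤ r)
    (hys : ∀ k, ‖ys k - q‖ ≤ r) (hsep : ∀ j k, j ≠ k → ε * r ≤ ‖A (ys j) - A (ys k)‖) :
    ∃ k, ‖ys k - p‖ ≤ 2 * (1 - β) * r := by
  have hnorm (w : E) : ‖r⁻¹ • w‖ = ‖w‖ / r := by
    rw [norm_smul, norm_inv, Real.norm_of_nonneg hr.le, inv_mul_eq_div]
  obtain ⟨k, hk⟩ := hA (r⁻¹ • (q - p)) (by rwa [hnorm, div_le_one hr])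
    (fun k ↦ r⁻¹ • (ys k - q)) (fun k ↦ by rw [hnorm, div_le_one hr]; exact hys k)
    (fun j k hjk ↦ by
      rw [map_smul, map_smul, ← smul_sub, map_sub, map_sub, sub_sub_sub_cancel_right,
        norm_smul, norm_inv, Real.norm_of_nonneg hr.le, inv_mul_eq_div, le_div_iff₀ hr]
      exact hsep j k hjk)
  refine ⟨k, ?_⟩
  rwa [← smul_add, sub_add_sub_cancel', hnorm, div_le_iff₀ hr] at hk

end BetaEstimate

section TreeFactorization

variable {E F : Type*} [NormedAddCommGroup E] [NormedAddCommGroup F]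

def IsTreeFactorization (A : E → F) (D : ℝ) (N : ℕ) (f : List ℕ → E) : Prop :=
  ∀ s t : List ℕ, s.length ≤ N → t.length ≤ N →
    (treeDist s t : ℝ) / D ≤ ‖A (f s) - A (f t)‖ ∧
    ‖A (f s) - A (f t)‖ ≤ ‖f s - f t‖ ∧
    ‖f s - f t‖ ≤ (treeDist s t : ℝ)

namespace IsTreeFactorization

variable {A : E → F} {D : ℝ} {N : ℕ} {f : List ℕ → E}

lemma norm_sub_le_length (hf : IsTreeFactorization A D N f) {s l : List ℕ}
    (h : (s ++ l).length ≤ N) : ‖f (s ++ l) - f s‖ ≤ l.length := by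
  have := (hf s (s ++ l) (by grind) h).2.2
  rwa [treeDist_self_append, norm_sub_rev] at this

lemma length_div_le_norm_sub (hf : IsTreeFactorization A D N f) {s l : List ℕ}
    (h : (s ++ l).length ≤ N) : (l.length : ℝ) / D ≤ ‖f (s ++ l) - f s‖ := by
  obtain ⟨hlow, hA, -⟩ := hf s (s ++ l) (by grind) h
  rw [treeDist_self_append, norm_sub_rev] at *
  exact hlow.trans hA

lemma pow_div_le_norm_map_sub_branches (hf : IsTreeFactorization A D N f) {i : ℕ}
    {v : List ℕ} (hv : v.length + 2 ^ i ≤ N) {m : ℕ → List ℕ}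
    (hm : ∀ k, (m k).length + 1 = 2 ^ i) {j k : ℕ} (hjk : j ≠ k) :
    (2 : ℝ) ^ (i + 1) / D ≤ ‖A (f (v ++ j :: m j)) - A (f (v ++ k :: m k))‖ := by
  have hlen (k : ℕ) : (v ++ k :: m k).length ≤ N := by
    simp only [List.length_append, List.length_cons]; grind
  have hdist : treeDist (v ++ j :: m j) (v ++ k :: m k) = 2 ^ (i + 1) := by
    rw [treeDist_append_cons_of_ne v hjk]; grind
  have := (hf _ _ (hlen j) (hlen k)).1
  rwa [hdist, Nat.cast_pow, Nat.cast_ofNat] at this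

theorem exists_descendant_norm_sub_le [NormedSpace ℝ E] [NormedSpace ℝ F] {A : E →L[ℝ] F}
    {β : ℝ} (hf : IsTreeFactorization A D N f) (hD : 0 < D) (hβ0 : 0 ≤ β) (hβ1 : β < 1)
    (hA : BetaEstimate A (2 / D) β) (i : ℕ) :
    ∀ s : List ℕ, s.length + 2 ^ i ≤ N → ∀ k₀ : ℕ,
      ∃ l : List ℕ, l.length + 1 = 2 ^ i ∧ ‖f (s ++ k₀ :: l) - f s‖ ≤ (2 * (1 - β)) ^ i := by
  induction i with
  | zero =>
    intro s hs k₀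
    refine ⟨[], rfl, ?_⟩
    simpa using hf.norm_sub_le_length (l := [k₀]) (by simpa using hs)
  | succ i ih =>
    intro s hs k₀
    have hpow : 2 ^ (i + 1) = 2 ^ i + 2 ^ i := by ring
    obtain ⟨l, hl, hsv⟩ := ih s (by grind) k₀
    set v := s ++ k₀ :: l
    have hv : v.length + 2 ^ i ≤ N := by
      simp only [v, List.length_append, List.length_cons]; omega
    choose m hm hvm using ih v hv
    have ht : (2 * (1 - β)) ^ i ≤ (2 : ℝ) ^ i :=
      pow_le_pow_left₀ (by linarith) (by linarith) i
    obtain ⟨k, hk⟩ := hA.exists_norm_sub_le (by positivity) (f s) (f v)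
      (fun k ↦ f (v ++ k :: m k)) hsv hvm fun j k hjk ↦ by
        refine le_trans ?_ (hf.pow_div_le_norm_map_sub_branches hv hm hjk)
        rw [pow_succ', mul_div_right_comm]
        gcongr
    refine ⟨l ++ k :: m k, by simp only [List.length_append, List.length_cons]; grind, ?_⟩
    simpa only [v, List.append_assoc, List.cons_append, pow_succ', ← mul_assoc] using hk

end IsTreeFactorization

end TreeFactorization

theorem statement9_general (A : X →L[ℝ] Y) (D β : ℝ)
    (hD : 1 ≤ D) (hβ0 : 0 < β) (hβ1 : β < 1)
    (hbeta : ∀ x : X, ‖x‖ ≤ 1 → ∀ xs : ℕ → X, (∀ k, ‖xs k‖ ≤ 1) →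
      (∀ j k, j ≠ k → 2 / D ≤ ‖A (xs j) - A (xs k)‖) →
      ∃ k, ‖x + xs k‖ ≤ 2 * (1 - β))
    (n : ℕ) (f : List ℕ → X)
    (hf : ∀ s t : List ℕ, s.length ≤ 2 ^ n → t.length ≤ 2 ^ n →
      (treeDist s t : ℝ) / D ≤ ‖A (f s) - A (f t)‖ ∧
      ‖A (f s) - A (f t)‖ ≤ ‖f s - f t‖ ∧
      ‖f s - f t‖ ≤ (treeDist s t : ℝ)) :
    ((1 - β)⁻¹) ^ n ≤ D := by
  have hD0 : 0 < D := by linarith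
  obtain ⟨l, hl, hshort⟩ := IsTreeFactorization.exists_descendant_norm_sub_le
    (A := A) hf hD0 hβ0.le hβ1 hbeta n [] (by simp) 0
  have hlong := IsTreeFactorization.length_div_le_norm_sub hf (s := []) (l := 0 :: l)
    (by simp only [List.nil_append, List.length_cons]; omega)
  have hl' : ((0 :: l).length : ℝ) = 2 ^ n := by
    rw [List.length_cons]; exact_mod_cast hl
  have key : (2 : ℝ) ^ n / D ≤ 2 ^ n * (1 - β) ^ n := by
    rw [← mul_pow, ← hl']; exact hlong.trans hshort
  rw [div_le_iff₀ hD0, mul_assoc, le_mul_iff_one_le_right (by positivity)] at key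
  rw [inv_pow, inv_le_iff_one_le_mul₀ (by have := sub_pos.2 hβ1; positivity), mul_comm]
  exact key

/-- the Baudier–Zheng/Kloeckner argument: if `A` has the property (β)
estimate with constant `β` at separation `2/D` and `f : T_{2^n} → X` is a factorization
of the tree `T_{2^n}` through `A` with distortion `D`, then `D ≥ (1−β)^{−n}`. -/
theorem statement9 (A : X →L[ℝ] Y) (hA : ‖A‖ ≤ 1) (D β : ℝ)
    (hD : 1 ≤ D) (hβ0 : 0 < β) (hβ1 : β < 1)
    (hbeta : ∀ x : X, ‖x‖ ≤ 1 → ∀ xs : ℕ → X, (∀ k, ‖xs k‖ ≤ 1) →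
      (∀ j k, j ≠ k → 2 / D ≤ ‖A (xs j) - A (xs k)‖) →
      ∃ k, ‖x + xs k‖ ≤ 2 * (1 - β))
    (n : ℕ) (hn : 1 ≤ n) (f : List ℕ → X)
    (hf : ∀ s t : List ℕ, s.length ≤ 2 ^ n → t.length ≤ 2 ^ n →
      (treeDist s t : ℝ) / D ≤ ‖A (f s) - A (f t)‖ ∧
      ‖A (f s) - A (f t)‖ ≤ ‖f s - f t‖ ∧
      ‖f s - f t‖ ≤ (treeDist s t : ℝ)) :
    ((1 - β)⁻¹) ^ n ≤ D :=
  statement9_general A D β hD hβ0 hβ1 hbeta n f hf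
end
end

section
/- Let X and Y be real Banach spaces and A : X → Y a bounded linear operator, and suppose ε > 0 is such that 0 ∈ s_{4ε}^n(A**(B_{X**})) for every n ∈ ℕ (derivation in Y** with the w*-topology σ(Y**, Y*)). Let T be the set of finite sequences of naturals, N : T → ℕ a bijection with N(s) < N(t) whenever s is a proper initial segment of t (write s < t iff N(s) < N(t)), r_n = 2^n − 1, ℓ(t) = max{n ≥ 0 : r_n ≤ |t|}, and L(t) = max{ℓ(s) : s ≤ t}. Then for every δ > 0 there exist collections (x_t)_{t∈T} ⊆ B_X, (y*_t)_{t∈T} ⊆ B_{Y*}, (x**_t)_{t∈T} ⊆ B_{X**} such that for every t ∈ T: (i) x**_t(A* y*_t) > ε − δ; (ii) for each s with ∅ < s < t, |x**_s(A* y*_t)| < δ/2^{3L(t)+2} and |y*_t(A x_s)| < δ/2^{3L(t)+2}; (iii) if |t| = r_n for some n, then for each ∅ < s < t, |x**_t(A* y*_s)| < δ/2^{3L(t)+2}; (iv) if r_n < |t| < r_{n+1} for some n, then for each ∅ < s < t, |x**_t(A* y*_s) − x**_{t⁻}(A* y*_s)| < δ/2^{3L(t)+2}, where t⁻ is t with its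 last entry removed; (v) for each s with ∅ < s ≤ t, |x**_t(A* y*_s) − y*_s(A x_t)| < δ/2^{3L(t)+2}. -/
open Filter Topology Pointwise NormedSpace

noncomputable section

variable {X Y : Type*} [NormedAddCommGroup X] [NormedSpace ℝ X] [CompleteSpace X]
  [NormedAddCommGroup Y] [NormedSpace ℝ Y] [CompleteSpace Y]

/-- The Szlenk derivation `s_ε(K)`: the points of `K` all of whose weak-star
neighborhoods meet `K` in a set of diameter greater than `ε`. -/
def szlenkDeriv {E : Type*} [NormedAddCommGroup E] [NormedSpace ℝ E] (ε : ℝ)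
    (K : Set (StrongDual ℝ E)) : Set (StrongDual ℝ E) :=
  {g ∈ K | ∀ V : Set (StrongDual ℝ E), IsWeakStarOpen V → g ∈ V → ε < Metric.diam (V ∩ K)}


/-!
The tree is built node by node along the enumeration `N`. A node `t` of level `n`
(`2^n - 1 ≤ |t| < 2^(n+1) - 1`) carries the invariant
`A** x**_t ∈ s_{4ε}^m(A** B_{X**})` with `m = 2^(n+1) - 2 - |t|`, which drops by one along a
level. Hence the parent point `p` of `t` (`0` at the first length of a level, `A** x**_{t⁻}`
otherwise) lies in `s_{4ε}` of the set where the new point is sought, so every weak-star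
neighbourhood of `p` meets that set in diameter `> 4ε`. A finite norming set for the
finite-dimensional span `F` of all functionals met so far then gives a point `A** x**_t` weak-star
close to `p` but at distance `> ε - δ` from `F`. Hahn–Banach produces `y*_t` annihilating `F` and
large on `A** x**_t`, and the finite form of Goldstine's theorem a vector `x_t` that reproduces
`x**_t` on the finitely many functionals `A* y*_s`, `s ≤ t`.
-/

section DualSpace

variable {E : Type*} [NormedAddCommGroup E] [NormedSpace ℝ E]

lemma IsWeakStarOpen.inter {V W : Set (StrongDual ℝ E)} (hV : IsWeakStarOpen V)
    (hW : IsWeakStarOpen W) : IsWeakStarOpen (V ∩ W) := by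
  rw [IsWeakStarOpen, Set.image_inter StrongDual.toWeakDual.injective]
  exact IsOpen.inter hV hW

lemma isWeakStarOpen_setOf_forall_abs_sub_lt (p : StrongDual ℝ E) (S : Finset E) (τ : ℝ) :
    IsWeakStarOpen {χ : StrongDual ℝ E | ∀ w ∈ S, |χ w - p w| < τ} := by
  have : StrongDual.toWeakDual '' {χ : StrongDual ℝ E | ∀ w ∈ S, |χ w - p w| < τ} =
      ⋂ w ∈ S, {ψ : WeakDual ℝ E | |ψ w - p w| < τ} := by
    ext ψ
    simp only [Set.mem_image, Set.mem_ofPred_eq, Set.mem_iInter]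
    exact ⟨by rintro ⟨χ, hχ, rfl⟩; exact hχ, fun hψ => ⟨StrongDual.toWeakDual.symm ψ, hψ, by simp⟩⟩
  rw [IsWeakStarOpen, this]
  exact isOpen_biInter_finset fun w _ =>
    isOpen_lt ((WeakDual.eval_continuous w).sub continuous_const).abs continuous_const

lemma szlenkDeriv_iterate_subset (ε : ℝ) (K : Set (StrongDual ℝ E)) (n : ℕ) :
    (szlenkDeriv ε)^[n] K ⊆ K := by
  induction n with
  | zero => exact subset_rfl
  | succ n ih =>
    rw [Function.iterate_succ_apply']
    exact (Set.sep_subset _ _).trans ih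

lemma exists_finset_norming (F : Submodule ℝ (StrongDual ℝ E)) [FiniteDimensional ℝ F]
    {M : ℝ} (hM : 1 < M) :
    ∃ S : Finset E, (∀ w ∈ S, ‖w‖ ≤ 1) ∧
      ∀ f ∈ F, ∀ a, 0 ≤ a → (∀ w ∈ S, |f w| ≤ a) → ‖f‖ ≤ M * a := by
  have hcover : ((↑) : F → StrongDual ℝ E) '' Metric.sphere 0 1 ⊆
      ⋃ w ∈ Metric.closedBall (0 : E) 1, {g | 1 < M * |g w|} := by
    rintro _ ⟨f, hf, rfl⟩
    have hf1 : ‖(f : StrongDual ℝ E)‖ = 1 := mem_sphere_zero_iff_norm.1 hf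
    obtain ⟨w, hw, hfw⟩ := (f : StrongDual ℝ E).exists_lt_apply_of_lt_opNorm
      (r := M⁻¹) (by rw [hf1]; exact inv_lt_one_of_one_lt₀ hM)
    refine Set.mem_biUnion (mem_closedBall_zero_iff.2 hw.le) ?_
    rw [Set.mem_ofPred_eq, ← inv_mul_lt_iff₀ (by linarith)]
    simpa using hfw
  obtain ⟨S, hSball, hSfin, hScover⟩ :=
    ((isCompact_sphere (0 : F) 1).image continuous_subtype_val).elim_finite_subcover_image
      (c := fun w => {g : StrongDual ℝ E | 1 < M * |g w|})
      (fun w _ => isOpen_lt continuous_const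
        (continuous_const.mul (ContinuousLinearMap.apply ℝ ℝ w).continuous.abs)) hcover
  refine ⟨hSfin.toFinset, fun w hw => mem_closedBall_zero_iff.1 (hSball (by simpa using hw)),
    fun f hf a ha hfS => ?_⟩
  rcases eq_or_ne f 0 with rfl | hf0
  · simpa using mul_nonneg (by linarith) ha
  have hfpos : 0 < ‖f‖ := norm_pos_iff.2 hf0
  have hf_unit : (⟨‖f‖⁻¹ • f, F.smul_mem _ hf⟩ : F) ∈ Metric.sphere 0 1 := by
    refine (mem_sphere_zero_iff_norm (E := F)).2 ?_
    simp [norm_smul, hfpos.ne']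
  obtain ⟨w, hwS, hw⟩ := Set.mem_iUnion₂.1 <| hScover ⟨_, hf_unit, rfl⟩
  have hw : ‖f‖ < M * |f w| := by
    rwa [Set.mem_ofPred_eq, FunLike.coe_smul, Pi.smul_apply, smul_eq_mul, abs_mul,
      abs_of_pos (inv_pos.2 hfpos), mul_left_comm, ← div_eq_inv_mul, one_lt_div hfpos] at hw
  nlinarith [hfS w (by simpa using hwS)]

lemma exists_mem_inter_forall_lt_norm_sub {K : Set (StrongDual ℝ E)} {p : StrongDual ℝ E}
    {ε : ℝ} (hε : 0 < ε) (hp : p ∈ szlenkDeriv (4 * ε) K)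
    (F : Submodule ℝ (StrongDual ℝ E)) [FiniteDimensional ℝ F] (hpF : p ∈ F)
    {V : Set (StrongDual ℝ E)} (hV : IsWeakStarOpen V) (hpV : p ∈ V)
    {c : ℝ} (hc0 : 0 ≤ c) (hc : c < ε) :
    ∃ φ ∈ V ∩ K, ∀ f ∈ F, c < ‖φ - f‖ := by
  -- Otherwise, on the weak-star neighbourhood of `p` where a norming set of `F` varies by less
  -- than `ε - c`, every point of `K` is within `c + M ε` of `p`, and `2 (c + M ε) < 4 ε`.
  by_contra! hnear
  set M := (3 * ε - c) / (2 * ε)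
  have hM1 : 1 < M := by rw [one_lt_div (by positivity)]; linarith
  obtain ⟨S, hS1, hSnorm⟩ := exists_finset_norming F hM1
  set V₁ := V ∩ {χ | ∀ w ∈ S, |χ w - p w| < ε - c}
  have hsub : V₁ ∩ K ⊆ Metric.closedBall p (c + M * ε) := by
    rintro φ ⟨⟨hφV, hφS⟩, hφK⟩
    obtain ⟨f, hfF, hf⟩ := hnear φ ⟨hφV, hφK⟩
    have hfp : ‖f - p‖ ≤ M * ε := by
      refine hSnorm _ (F.sub_mem hfF hpF) ε hε.le fun w hw => ?_
      have hφf : |(φ - f) w| ≤ c := by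
        simpa [Real.norm_eq_abs] using
          ((φ - f).le_opNorm w).trans ((mul_le_of_le_one_right (norm_nonneg _) (hS1 w hw)).trans hf)
      calc |(f - p) w| = |(φ w - p w) - (φ - f) w| := by simp
        _ ≤ |φ w - p w| + |(φ - f) w| := abs_sub _ _
        _ ≤ ε := by linarith [hφS w hw]
    rw [Metric.mem_closedBall, dist_eq_norm]
    calc ‖φ - p‖ = ‖(φ - f) + (f - p)‖ := by rw [sub_add_sub_cancel]
      _ ≤ c + M * ε := (norm_add_le _ _).trans (add_le_add hf hfp)
  have hdiam := hp.2 V₁ (hV.inter (isWeakStarOpen_setOf_forall_abs_sub_lt p S _))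
    ⟨hpV, fun w _ => by simpa using hc⟩
  have hM : 2 * (c + M * ε) = 3 * ε + c := by simp only [M]; field_simp; ring
  linarith [(Metric.diam_mono hsub Metric.isBounded_closedBall).trans
    (Metric.diam_closedBall (by nlinarith : 0 ≤ c + M * ε))]

lemma mem_span_of_forall_eq_zero (G : Finset (StrongDual ℝ E)) {χ : StrongDual ℝ E}
    (hχ : ∀ w : E, (∀ g ∈ G, g w = 0) → χ w = 0) :
    χ ∈ Submodule.span ℝ (G : Set (StrongDual ℝ E)) := by
  let ι := ContinuousLinearMap.coeLM (R := ℝ) (M := E) (N₃ := ℝ) ℝ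
  have : ι χ ∈ Submodule.span ℝ (Set.range fun g : (G : Set (StrongDual ℝ E)) => ι g) :=
    mem_span_of_iInf_ker_le_ker fun w hw => by
      simp only [Submodule.mem_iInf, LinearMap.mem_ker] at hw
      exact hχ w fun g hg => hw ⟨g, hg⟩
  rw [← Set.image_eq_range ι, Submodule.span_image] at this
  obtain ⟨χ', hχ', hι⟩ := Submodule.mem_map.1 this
  rwa [ContinuousLinearMap.coe_injective hι] at hχ'

lemma exists_norm_le_one_forall_eq_zero_lt_apply (G : Finset (StrongDual ℝ E))
    (χ : StrongDual ℝ E) {c : ℝ}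
    (hχ : ∀ f ∈ Submodule.span ℝ (G : Set (StrongDual ℝ E)), c < ‖χ - f‖) :
    ∃ w : E, ‖w‖ ≤ 1 ∧ (∀ g ∈ G, g w = 0) ∧ c < χ w := by
  let M : Submodule ℝ E := ⨅ g ∈ G, LinearMap.ker (g : E →ₗ[ℝ] ℝ)
  have hM : ∀ w, w ∈ M ↔ ∀ g ∈ G, g w = 0 := by simp [M]
  obtain ⟨χ', hχ'M, hχ'⟩ := exists_extension_norm_eq M (χ.comp M.subtypeL)
  have hspan : χ - χ' ∈ Submodule.span ℝ (G : Set (StrongDual ℝ E)) :=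
    mem_span_of_forall_eq_zero G fun w hw => by
      simpa [sub_eq_zero] using (hχ'M ⟨w, (hM w).2 hw⟩).symm
  obtain ⟨m, hm1, hm⟩ := (χ.comp M.subtypeL).exists_lt_apply_of_lt_opNorm
    (by simpa [← hχ'] using hχ _ hspan)
  have hmG := (hM m).1 m.2
  rw [Real.norm_eq_abs, ContinuousLinearMap.comp_apply, Submodule.subtypeL_apply] at hm
  rcases lt_abs.1 hm with hm | hm
  · exact ⟨m, by simpa using hm1.le, hmG, hm⟩
  · exact ⟨-m, by simpa using hm1.le, fun g hg => by simp [hmG g hg], by simpa using hm⟩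

lemma exists_norm_le_one_forall_abs_apply_sub_lt (φ : StrongDual ℝ (StrongDual ℝ E))
    (hφ : ‖φ‖ ≤ 1) (G : Finset (StrongDual ℝ E)) {η : ℝ} (hη : 0 < η) :
    ∃ x : E, ‖x‖ ≤ 1 ∧ ∀ g ∈ G, |g x - φ g| < η := by
  classical
  let T : E →L[ℝ] (G → ℝ) := ContinuousLinearMap.pi fun g => (g : StrongDual ℝ E)
  let v : G → ℝ := fun g => φ g
  suffices hv : v ∈ closure (T '' Metric.closedBall 0 1) by
    obtain ⟨_, ⟨x, hx, rfl⟩, hdist⟩ := Metric.mem_closure_iff.1 hv η hη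
    refine ⟨x, mem_closedBall_zero_iff.1 hx, fun g hg => ?_⟩
    simpa [v, T, Real.dist_eq, abs_sub_comm] using (dist_pi_lt_iff hη).1 hdist ⟨g, hg⟩
  -- A functional `ℓ` separating `v` from `T (B_E)` would give `‖ℓ ∘ T‖ ≤ u < ℓ v = φ (ℓ ∘ T)`.
  by_contra hv
  obtain ⟨ℓ, u, hℓT, hℓv⟩ := geometric_hahn_banach_closed_point
    ((convex_closedBall 0 1).linear_image T.toLinearMap).closure isClosed_closure hv
  have hball : ∀ x ∈ Metric.closedBall (0 : E) 1, ℓ (T x) < u :=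
    fun x hx => hℓT _ (subset_closure ⟨x, hx, rfl⟩)
  have hnorm : ‖ℓ.comp T‖ ≤ u := by
    refine ContinuousLinearMap.opNorm_le_of_unit_norm ?_ fun x hx => ?_
    · simpa using (hball 0 (Metric.mem_closedBall_self zero_le_one)).le
    · have h₁ := hball x (by simp [hx])
      have h₂ := hball (-x) (by simp [hx])
      simp only [map_neg] at h₂
      simpa [Real.norm_eq_abs, abs_le] using ⟨by linarith, h₁.le⟩
  have hℓ : ∀ w : G → ℝ, ℓ w = ∑ g, w g * ℓ (fun h => if g = h then 1 else 0) := fun w => by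
    simpa using (ℓ : (G → ℝ) →ₗ[ℝ] ℝ).pi_apply_eq_sum_univ w
  have hφℓ : φ (ℓ.comp T) = ℓ v := by
    have : ℓ.comp T = ∑ g, ℓ (fun h => if g = h then 1 else 0) • (g : StrongDual ℝ E) := by
      ext x
      rw [ContinuousLinearMap.comp_apply, hℓ (T x)]
      simp [T, mul_comm]
    simp [this, hℓ v, v, mul_comm]
  have := (le_abs_self _).trans ((φ.le_opNorm (ℓ.comp T)).trans
    (mul_le_of_le_one_left (norm_nonneg _) hφ))
  linarith

end DualSpace

theorem exists_forall_of_exists_update {α β : Type*} [DecidableEq α] [Nonempty β] {e : α → ℕ}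
    (he : Function.Injective e) (P : (α → β) → α → Prop)
    (hP : ∀ f g t, (∀ s, e s ≤ e t → f s = g s) → P f t → P g t)
    (hstep : ∀ f t, (∀ s, e s < e t → P f s) → ∃ b, P (Function.update f t b) t) :
    ∃ f, ∀ t, P f t := by
  have hwf := InvImage.wf e wellFounded_lt
  let extend (t : α) (ih : ∀ s, e s < e t → β) (b : β) : α → β :=
    fun s => if h : e s < e t then ih s h else b
  let f := hwf.fix fun t ih => Classical.epsilon fun b => P (extend t ih b) t
  have hf : ∀ t, f t = Classical.epsilon fun b => P (extend t (fun s _ => f s) b) t :=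
    hwf.fix_eq _
  have hext : ∀ t b s, e s ≤ e t → extend t (fun s _ => f s) b s = Function.update f t b s := by
    intro t b s hs
    rcases hs.lt_or_eq with hlt | heq
    · simp [extend, hlt, Function.update_of_ne (ne_of_apply_ne e hlt.ne)]
    · simp [extend, he heq]
  refine ⟨f, fun t => hwf.induction t fun t ih => ?_⟩
  obtain ⟨b, hb⟩ := hstep f t ih
  have := Classical.epsilon_spec (p := fun b => P (extend t (fun s _ => f s) b) t)
    ⟨b, hP _ _ t (fun s hs => (hext t b s hs).symm) hb⟩
  rw [← hf] at this
  exact hP _ _ t (fun s hs => by rw [hext t _ s hs, Function.update_eq_self]) this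

-- The number of lengths after `m` in its level `[2 ^ n - 1, 2 ^ (n + 1) - 2]`.
def blockRest (m : ℕ) : ℕ := 2 ^ (Nat.log 2 (m + 1) + 1) - 2 - m

lemma blockRest_sub_one {m : ℕ} (hm : ∀ n, m ≠ 2 ^ n - 1) :
    blockRest (m - 1) = blockRest m + 1 := by
  set k := Nat.log 2 (m + 1) with hk
  have hlo : 2 ^ k ≤ m + 1 := Nat.pow_log_le_self 2 (by omega)
  have hhi : m + 1 < 2 ^ (k + 1) := Nat.lt_pow_succ_log_self (by norm_num) _
  have hm0 := hm 0
  have hmk := hm k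
  have hk' : Nat.log 2 (m - 1 + 1) = k := Nat.log_eq_of_pow_le_of_lt_pow (by omega) (by omega)
  simp only [blockRest, hk', ← hk]
  omega

lemma ne_pow_sub_one_of_lt_of_lt {m n : ℕ} (h₁ : 2 ^ n - 1 < m) (h₂ : m < 2 ^ (n + 1) - 1) (k : ℕ) :
    m ≠ 2 ^ k - 1 := by
  rintro rfl
  have := Nat.one_le_two_pow (n := n)
  have := Nat.one_le_two_pow (n := k)
  have h₁ : n < k := (Nat.pow_lt_pow_iff_right (a := 2) (by norm_num)).1 (by omega)
  have h₂ : k < n + 1 := (Nat.pow_lt_pow_iff_right (a := 2) (by norm_num)).1 (by omega)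
  omega

section Tree

variable {V W : Type*} [NormedAddCommGroup V] [NormedSpace ℝ V] [NormedAddCommGroup W]
  [NormedSpace ℝ W]

def biadjointBallImage (A : V →L[ℝ] W) : Set (StrongDual ℝ (StrongDual ℝ W)) :=
  (fun φ : StrongDual ℝ (StrongDual ℝ V) => φ.comp (opAdjoint A)) '' Metric.closedBall 0 1

lemma exists_bidual_forall_eq_zero_lt (A : V →L[ℝ] W) {ε c : ℝ} (hε : 0 < ε) (hc0 : 0 ≤ c)
    (hc : c < ε) {n : ℕ} {p : StrongDual ℝ (StrongDual ℝ W)}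
    (hp : p ∈ szlenkDeriv (4 * ε) ((szlenkDeriv (4 * ε))^[n] (biadjointBallImage A)))
    (Φ : Finset (StrongDual ℝ (StrongDual ℝ W))) (hpΦ : p ∈ Φ) (Ψ : Finset (StrongDual ℝ W))
    {η : ℝ} (hη : 0 < η) :
    ∃ z : StrongDual ℝ (StrongDual ℝ V), ‖z‖ ≤ 1 ∧
      z.comp (opAdjoint A) ∈ (szlenkDeriv (4 * ε))^[n] (biadjointBallImage A) ∧
      (∀ g ∈ Ψ, |z (opAdjoint A g) - p g| < η) ∧
      ∃ y : StrongDual ℝ W, ‖y‖ ≤ 1 ∧ (∀ ψ ∈ Φ, ψ y = 0) ∧ c < z (opAdjoint A y) := by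
  obtain ⟨φ, ⟨hφV, hφK⟩, hφF⟩ := exists_mem_inter_forall_lt_norm_sub hε hp
    (Submodule.span ℝ (Φ : Set (StrongDual ℝ (StrongDual ℝ W)))) (Submodule.subset_span hpΦ)
    (isWeakStarOpen_setOf_forall_abs_sub_lt p Ψ η) (fun g _ => by simpa using hη) hc0 hc
  obtain ⟨z, hz, rfl⟩ := szlenkDeriv_iterate_subset _ _ _ hφK
  exact ⟨z, (mem_closedBall_zero_iff (E := StrongDual ℝ (StrongDual ℝ V))).1 hz, hφK, hφV,
    exists_norm_le_one_forall_eq_zero_lt_apply Φ _ hφF⟩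

structure TreeNode (V W : Type*) [NormedAddCommGroup V] [NormedSpace ℝ V]
    [NormedAddCommGroup W] [NormedSpace ℝ W] where
  x : V
  y : StrongDual ℝ W
  z : StrongDual ℝ (StrongDual ℝ V)

instance : Nonempty (TreeNode V W) := ⟨⟨0, 0, 0⟩⟩

variable (A : V →L[ℝ] W) (ε δ : ℝ) (N : List ℕ → ℕ) (η : List ℕ → ℝ)

structure IsGoodNode (f : List ℕ → TreeNode V W) (t : List ℕ) : Prop where
  norm_x_le : ‖(f t).x‖ ≤ 1
  norm_y_le : ‖(f t).y‖ ≤ 1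
  norm_z_le : ‖(f t).z‖ ≤ 1
  mem_derived : (f t).z.comp (opAdjoint A) ∈
    (szlenkDeriv (4 * ε))^[blockRest t.length] (biadjointBallImage A)
  lt_apply : ε - δ < (f t).z (opAdjoint A (f t).y)
  abs_z_y_lt : ∀ s, N s < N t → |(f s).z (opAdjoint A (f t).y)| < η t
  abs_y_x_lt : ∀ s, N s < N t → |(f t).y (A (f s).x)| < η t
  abs_z_y_lt_of_start : (∃ n, t.length = 2 ^ n - 1) →
    ∀ s, N s < N t → |(f t).z (opAdjoint A (f s).y)| < η t
  abs_sub_lt_of_not_start : (∀ n, t.length ≠ 2 ^ n - 1) → ∀ s, N s < N t →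
    |(f t).z (opAdjoint A (f s).y) - (f t.dropLast).z (opAdjoint A (f s).y)| < η t
  abs_sub_lt : ∀ s, N s ≤ N t → |(f t).z (opAdjoint A (f s).y) - (f s).y (A (f t).x)| < η t

variable {A ε δ N η}

lemma apply_le_of_isPrefix (hNmono : ∀ s t : List ℕ, s <+: t → s ≠ t → N s < N t) {s t : List ℕ}
    (h : s <+: t) : N s ≤ N t := by
  rcases eq_or_ne s t with rfl | hst
  · exact le_rfl
  · exact (hNmono s t h hst).le

lemma IsGoodNode.congr (hNmono : ∀ s t : List ℕ, s <+: t → s ≠ t → N s < N t)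
    {f g : List ℕ → TreeNode V W} {t : List ℕ} (h : IsGoodNode A ε δ N η f t)
    (hfg : ∀ s, N s ≤ N t → f s = g s) : IsGoodNode A ε δ N η g t := by
  have ht := hfg t le_rfl
  have hlt : ∀ s, N s < N t → f s = g s := fun s hs => hfg s hs.le
  have hdl := hfg t.dropLast (apply_le_of_isPrefix hNmono t.dropLast_prefix)
  exact
  { norm_x_le := by rw [← ht]; exact h.norm_x_le
    norm_y_le := by rw [← ht]; exact h.norm_y_le
    norm_z_le := by rw [← ht]; exact h.norm_z_le
    mem_derived := by rw [← ht]; exact h.mem_derived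
    lt_apply := by rw [← ht]; exact h.lt_apply
    abs_z_y_lt := fun s hs => by rw [← ht, ← hlt s hs]; exact h.abs_z_y_lt s hs
    abs_y_x_lt := fun s hs => by rw [← ht, ← hlt s hs]; exact h.abs_y_x_lt s hs
    abs_z_y_lt_of_start := fun hst s hs => by
      rw [← ht, ← hlt s hs]; exact h.abs_z_y_lt_of_start hst s hs
    abs_sub_lt_of_not_start := fun hst s hs => by
      rw [← ht, ← hlt s hs, ← hdl]; exact h.abs_sub_lt_of_not_start hst s hs
    abs_sub_lt := fun s hs => by rw [← ht, ← hfg s hs]; exact h.abs_sub_lt s hs }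

lemma apply_dropLast_lt (hNmono : ∀ s t : List ℕ, s <+: t → s ≠ t → N s < N t) {t : List ℕ}
    (ht : ∀ n, t.length ≠ 2 ^ n - 1) : N t.dropLast < N t := by
  refine hNmono _ _ t.dropLast_prefix fun he => ?_
  have := congrArg List.length he
  have := List.length_pos_iff.2 (show t ≠ [] by rintro rfl; exact ht 0 rfl)
  rw [List.length_dropLast] at *
  omega

lemma exists_parent_mem_szlenkDeriv (h : ∀ n : ℕ, (0 : StrongDual ℝ (StrongDual ℝ W)) ∈
      (szlenkDeriv (4 * ε))^[n] (biadjointBallImage A))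
    (hNmono : ∀ s t : List ℕ, s <+: t → s ≠ t → N s < N t)
    {f : List ℕ → TreeNode V W} {t : List ℕ} (hf : ∀ s, N s < N t → IsGoodNode A ε δ N η f s) :
    ∃ p ∈ szlenkDeriv (4 * ε) ((szlenkDeriv (4 * ε))^[blockRest t.length] (biadjointBallImage A)),
      ((∃ n, t.length = 2 ^ n - 1) → p = 0) ∧
      ((∀ n, t.length ≠ 2 ^ n - 1) → p = (f t.dropLast).z.comp (opAdjoint A)) := by
  simp only [← Function.iterate_succ_apply' (szlenkDeriv (4 * ε))]
  by_cases hstart : ∃ n, t.length = 2 ^ n - 1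
  · exact ⟨0, h _, fun _ => rfl, fun hns => absurd hstart (by simpa using hns)⟩
  simp only [not_exists] at hstart
  have hdl := (hf t.dropLast (apply_dropLast_lt hNmono hstart)).mem_derived
  rw [List.length_dropLast, blockRest_sub_one hstart] at hdl
  exact ⟨_, hdl, fun ⟨n, hn⟩ => absurd hn (hstart n), fun _ => rfl⟩

lemma isGoodNode_update (hN : Function.Injective N)
    (hNmono : ∀ s t : List ℕ, s <+: t → s ≠ t → N s < N t) {f : List ℕ → TreeNode V W}
    {t : List ℕ} {b : TreeNode V W} {p : StrongDual ℝ (StrongDual ℝ W)} (hη : 0 < η t)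
    (hp_start : (∃ n, t.length = 2 ^ n - 1) → p = 0)
    (hp_parent : (∀ n, t.length ≠ 2 ^ n - 1) → p = (f t.dropLast).z.comp (opAdjoint A))
    (hx : ‖b.x‖ ≤ 1) (hy : ‖b.y‖ ≤ 1) (hz : ‖b.z‖ ≤ 1)
    (hzK : b.z.comp (opAdjoint A) ∈
      (szlenkDeriv (4 * ε))^[blockRest t.length] (biadjointBallImage A))
    (hzy : ε - δ < b.z (opAdjoint A b.y))
    (hann : ∀ s, N s < N t → (f s).z (opAdjoint A b.y) = 0 ∧ b.y (A (f s).x) = 0)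
    (hzp : ∀ s, N s < N t → |b.z (opAdjoint A (f s).y) - p (f s).y| < η t)
    (hxz : ∀ s, N s < N t → |(f s).y (A b.x) - b.z (opAdjoint A (f s).y)| < η t)
    (hxz_self : |b.y (A b.x) - b.z (opAdjoint A b.y)| < η t) :
    IsGoodNode A ε δ N η (Function.update f t b) t := by
  have hupd : ∀ s, N s < N t → Function.update f t b s = f s :=
    fun s hs => Function.update_of_ne (ne_of_apply_ne N hs.ne) _ _
  have hself : Function.update f t b t = b := Function.update_self _ _ _
  exact
  { norm_x_le := by rw [hself]; exact hx
    norm_y_le := by rw [hself]; exact hy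
    norm_z_le := by rw [hself]; exact hz
    mem_derived := by rw [hself]; exact hzK
    lt_apply := by rw [hself]; exact hzy
    abs_z_y_lt := fun s hs => by simpa [hself, hupd s hs, (hann s hs).1] using hη
    abs_y_x_lt := fun s hs => by simpa [hself, hupd s hs, (hann s hs).2] using hη
    abs_z_y_lt_of_start := fun hst s hs => by
      simpa [hself, hupd s hs, hp_start hst] using hzp s hs
    abs_sub_lt_of_not_start := fun hst s hs => by
      simpa [hself, hupd s hs, hupd _ (apply_dropLast_lt hNmono hst), hp_parent hst] using hzp s hs
    abs_sub_lt := fun s hs => by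
      rcases hs.lt_or_eq with hs | hs
      · simpa [hself, hupd s hs, abs_sub_comm] using hxz s hs
      · obtain rfl := hN hs
        simpa [hself, abs_sub_comm] using hxz_self }

lemma exists_isGoodNode_update (hε : 0 < ε) (hδ : 0 < δ) (h : ∀ n : ℕ,
      (0 : StrongDual ℝ (StrongDual ℝ W)) ∈ (szlenkDeriv (4 * ε))^[n] (biadjointBallImage A))
    (hN : Function.Injective N) (hNmono : ∀ s t : List ℕ, s <+: t → s ≠ t → N s < N t)
    (f : List ℕ → TreeNode V W) (t : List ℕ) (hη : 0 < η t)
    (hf : ∀ s, N s < N t → IsGoodNode A ε δ N η f s) :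
    ∃ b, IsGoodNode A ε δ N η (Function.update f t b) t := by
  classical
  obtain ⟨p, hp, hp_start, hp_parent⟩ := exists_parent_mem_szlenkDeriv h hNmono hf
  let prev : Finset (List ℕ) := (Finset.range (N t)).preimage N hN.injOn
  have hprev : ∀ s, N s < N t → s ∈ prev := fun s hs => by simpa [prev] using hs
  obtain ⟨c, hc0, hδc, hcε⟩ : ∃ c, 0 ≤ c ∧ ε - δ < c ∧ c < ε :=
    ⟨max (ε - δ / 2) (ε / 2), by positivity, lt_max_of_lt_left (by linarith),
      max_lt (by linarith) (by linarith)⟩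
  obtain ⟨z, hz, hzK, hzp, y, hy, hyΦ, hzy⟩ := exists_bidual_forall_eq_zero_lt A hε hc0 hcε hp
    (insert p (prev.image (fun s => (f s).z.comp (opAdjoint A)) ∪
      prev.image (fun s => inclusionInDoubleDual ℝ W (A (f s).x))))
    (Finset.mem_insert_self _ _) (prev.image fun s => (f s).y) hη
  obtain ⟨x, hx, hxz⟩ := exists_norm_le_one_forall_abs_apply_sub_lt z hz
    (insert (opAdjoint A y) (prev.image fun s => opAdjoint A (f s).y)) hη
  refine ⟨⟨x, y, z⟩, isGoodNode_update hN hNmono hη hp_start hp_parent hx hy hz hzK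
    (hδc.trans hzy) (fun s hs => ⟨?_, ?_⟩)
    (fun s hs => hzp _ (Finset.mem_image_of_mem _ (hprev s hs)))
    (fun s hs => hxz _ (Finset.mem_insert_of_mem (Finset.mem_image_of_mem _ (hprev s hs))))
    (hxz _ (Finset.mem_insert_self _ _))⟩
  · exact hyΦ _ (Finset.mem_insert_of_mem (Finset.mem_union_left _
      (Finset.mem_image_of_mem _ (hprev s hs))))
  · simpa using hyΦ _ (Finset.mem_insert_of_mem (Finset.mem_union_right _
      (Finset.mem_image_of_mem _ (hprev s hs))))

lemma exists_forall_isGoodNode (hε : 0 < ε) (hδ : 0 < δ) (hη : ∀ t, 0 < η t)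
    (h : ∀ n : ℕ, (0 : StrongDual ℝ (StrongDual ℝ W)) ∈
      (szlenkDeriv (4 * ε))^[n] (biadjointBallImage A))
    (hN : Function.Injective N) (hNmono : ∀ s t : List ℕ, s <+: t → s ≠ t → N s < N t) :
    ∃ f, ∀ t, IsGoodNode A ε δ N η f t :=
  exists_forall_of_exists_update hN _ (fun _ _ _ hfg hf => hf.congr hNmono hfg)
    fun f t hf => exists_isGoodNode_update hε hδ h hN hNmono f t (hη t) hf

end Tree

theorem statement13_general (A : X →L[ℝ] Y) (ε : ℝ) (hε : 0 < ε)
    (h : ∀ n : ℕ, (0 : StrongDual ℝ (StrongDual ℝ Y)) ∈ (szlenkDeriv (4 * ε))^[n]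
      ((fun φ : StrongDual ℝ (StrongDual ℝ X) => φ.comp (opAdjoint A)) '' Metric.closedBall 0 1))
    (N : List ℕ → ℕ) (hNbij : Function.Bijective N)
    (hNmono : ∀ s t : List ℕ, s <+: t → s ≠ t → N s < N t)
    (L : List ℕ → ℕ)
    (δ : ℝ) (hδ : 0 < δ) :
    ∃ (x : List ℕ → X) (ys : List ℕ → StrongDual ℝ Y) (xss : List ℕ → StrongDual ℝ (StrongDual ℝ X)),
      (∀ t, ‖x t‖ ≤ 1) ∧ (∀ t, ‖ys t‖ ≤ 1) ∧ (∀ t, ‖xss t‖ ≤ 1) ∧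
      ∀ t : List ℕ,
        (ε - δ < xss t (opAdjoint A (ys t))) ∧
        (∀ s : List ℕ, s ≠ [] → N s < N t →
          |xss s (opAdjoint A (ys t))| < δ / 2 ^ (3 * L t + 2) ∧
          |ys t (A (x s))| < δ / 2 ^ (3 * L t + 2)) ∧
        ((∃ n : ℕ, t.length = 2 ^ n - 1) →
          ∀ s : List ℕ, s ≠ [] → N s < N t →
            |xss t (opAdjoint A (ys s))| < δ / 2 ^ (3 * L t + 2)) ∧
        ((∃ n : ℕ, 2 ^ n - 1 < t.length ∧ t.length < 2 ^ (n + 1) - 1) →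
          ∀ s : List ℕ, s ≠ [] → N s < N t →
            |xss t (opAdjoint A (ys s)) - xss t.dropLast (opAdjoint A (ys s))| <
              δ / 2 ^ (3 * L t + 2)) ∧
        (∀ s : List ℕ, s ≠ [] → N s ≤ N t →
          |xss t (opAdjoint A (ys s)) - ys s (A (x t))| < δ / 2 ^ (3 * L t + 2)) := by
  obtain ⟨f, hf⟩ := exists_forall_isGoodNode (A := A) (η := fun t => δ / 2 ^ (3 * L t + 2))
    hε hδ (fun t => by positivity) h hNbij.injective hNmono
  refine ⟨fun t => (f t).x, fun t => (f t).y, fun t => (f t).z, fun t => (hf t).norm_x_le,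
    fun t => (hf t).norm_y_le, fun t => (hf t).norm_z_le, fun t => ⟨(hf t).lt_apply,
      fun s _ hs => ⟨(hf t).abs_z_y_lt s hs, (hf t).abs_y_x_lt s hs⟩,
      fun hstart s _ hs => (hf t).abs_z_y_lt_of_start hstart s hs,
      fun ⟨_, h₁, h₂⟩ s _ hs =>
        (hf t).abs_sub_lt_of_not_start (ne_pow_sub_one_of_lt_of_lt h₁ h₂) s hs,
      fun s _ hs => (hf t).abs_sub_lt s hs⟩⟩

/-- Lemma 6.3 of the paper: construction of trees of vectors,
functionals and bidual vectors indexed by `T = List ℕ` with the prescribed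
biorthogonality estimates, under the assumption `0 ∈ s_{4ε}^n(A** B_{X**})` for all
`n`.  Here `N` is a bijective enumeration of `T` compatible with the prefix order,
`r_n = 2^n − 1`, `ℓ t = max{n : r_n ≤ |t|}` and `L t = max{ℓ s : N s ≤ N t}`. -/
theorem statement13 (A : X →L[ℝ] Y) (ε : ℝ) (hε : 0 < ε)
    (h : ∀ n : ℕ, (0 : StrongDual ℝ (StrongDual ℝ Y)) ∈ (szlenkDeriv (4 * ε))^[n]
      ((fun φ : StrongDual ℝ (StrongDual ℝ X) => φ.comp (opAdjoint A)) '' Metric.closedBall 0 1))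
    (N : List ℕ → ℕ) (hNbij : Function.Bijective N)
    (hNmono : ∀ s t : List ℕ, s <+: t → s ≠ t → N s < N t)
    (ℓ L : List ℕ → ℕ)
    (hℓ : ∀ t : List ℕ, IsGreatest {n : ℕ | 2 ^ n - 1 ≤ t.length} (ℓ t))
    (hL : ∀ t : List ℕ, IsGreatest {m : ℕ | ∃ s : List ℕ, N s ≤ N t ∧ ℓ s = m} (L t))
    (δ : ℝ) (hδ : 0 < δ) :
    ∃ (x : List ℕ → X) (ys : List ℕ → StrongDual ℝ Y) (xss : List ℕ → StrongDual ℝ (StrongDual ℝ X)),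
      (∀ t, ‖x t‖ ≤ 1) ∧ (∀ t, ‖ys t‖ ≤ 1) ∧ (∀ t, ‖xss t‖ ≤ 1) ∧
      ∀ t : List ℕ,
        (ε - δ < xss t (opAdjoint A (ys t))) ∧
        (∀ s : List ℕ, s ≠ [] → N s < N t →
          |xss s (opAdjoint A (ys t))| < δ / 2 ^ (3 * L t + 2) ∧
          |ys t (A (x s))| < δ / 2 ^ (3 * L t + 2)) ∧
        ((∃ n : ℕ, t.length = 2 ^ n - 1) →
          ∀ s : List ℕ, s ≠ [] → N s < N t →
            |xss t (opAdjoint A (ys s))| < δ / 2 ^ (3 * L t + 2)) ∧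
        ((∃ n : ℕ, 2 ^ n - 1 < t.length ∧ t.length < 2 ^ (n + 1) - 1) →
          ∀ s : List ℕ, s ≠ [] → N s < N t →
            |xss t (opAdjoint A (ys s)) - xss t.dropLast (opAdjoint A (ys s))| <
              δ / 2 ^ (3 * L t + 2)) ∧
        (∀ s : List ℕ, s ≠ [] → N s ≤ N t →
          |xss t (opAdjoint A (ys s)) - ys s (A (x t))| < δ / 2 ^ (3 * L t + 2)) :=
  statement13_general A ε hε h N hNbij hNmono L δ hδ

end
end

section
/- With the notation of the tree construction lemma (Lemma 6.2 of the paper): let ε, δ > 0 and let (x_t)_{t∈T} ⊆ B_X, (y*_t)_{t∈T} ⊆ B_{Y*}, (x**_t)_{t∈T} ⊆ B_{X**} satisfy x_∅ = y*_∅ = x**_∅ = 0 and conditions (i)–(v) of that lemma (with respect to the bijection N, the functions ℓ, L, and the bounds δ/2^{3L(t)+2}). Then: (1) for every i ∈ ℕ and every nonempty segment 𝔰 ⊆ L_i, if v is the ≺-minimal member of 𝔰 then Σ_{w∈𝔰} x**_w(A* y*_v) ≥ (ε − 3δ)|𝔰| and Σ_{w∈𝔰} y*_v(A x_w) ≥ (ε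 − 3δ)|𝔰|; (2) for every i and every nonempty segment 𝔰 ⊆ L_i, if v is the ≺-maximal member of 𝔰 then Σ_{w∈𝔰} x**_v(A* y*_w) ≥ (ε − 3δ)|𝔰|; (3) if v, w ∈ T are incomparable under ≺ or ℓ(w) ≠ ℓ(v), then |x**_w(A* y*_v)| < δ/2^{max{ℓ(v),ℓ(w)}} and |y*_v(A x_w)| < δ/2^{max{ℓ(v),ℓ(w)}}; (4) for any segment 𝔰 and any v ∈ T such that 𝔰 ⊏ v, v ⊏ 𝔰, or 𝔰 ⊥ v, the sums Σ_{w∈𝔰} |x**_w(A* y*_v)|, Σ_{w∈𝔰} |y*_v(A x_w)|, and Σ_{w∈𝔰} |x**_v(A* y*_w)| are each less than δ. -/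
/-!
Everything reduces to estimates on the scalar arrays `a t s = x**_t(A* y*_s)` and
`b s t = y*_s(A x_t)`. Inside one level, condition (iv) links `a t s` to the diagonal
`a s s > ε - δ` in fewer than `2 ^ (ℓ + 1)` steps of size `δ / 2 ^ (3ℓ + 2)`, so `a t s ≥ ε - 2δ`,
and (v) passes this on to `b`. When `s` and `t` are apart (incomparable, or on different
levels), telescoping from `t` down to the first node of its level, stopping early at a node
that precedes `s` where (ii) applies, gives `|a t s| ≤ δ / 2 ^ (2M + 2)` with `M` the larger
level. Along a segment the nodes have distinct lengths `k`, and these bounds are dominated by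
`2δ / ((k + 1)(k + 2))`, whose sum over `k ≥ 1` is below `δ`.
-/

open Filter Topology Pointwise NormedSpace

noncomputable section

variable {X Y : Type*} [NormedAddCommGroup X] [NormedSpace ℝ X] [CompleteSpace X]
  [NormedAddCommGroup Y] [NormedSpace ℝ Y] [CompleteSpace Y]

/-- The segment `[u, t] = {w : u ⪯ w ⪯ t}` of the tree `T = List ℕ` (here `⪯` is the
initial-segment order), realized as a finite set when `u <+: t`. -/
def seg (u t : List ℕ) : Finset (List ℕ) :=
  (Finset.Icc u.length t.length).image fun k => t.take k

theorem div_two_pow_le_div_two_pow {δ : ℝ} (hδ : 0 ≤ δ) {m n : ℕ} (h : m ≤ n) :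
    δ / 2 ^ n ≤ δ / 2 ^ m :=
  div_le_div_of_nonneg_left hδ (by positivity) (pow_le_pow_right₀ (by norm_num) h)

theorem mul_div_two_pow_add_le {δ c : ℝ} (hδ : 0 ≤ δ) {m n : ℕ} (hc : c ≤ 2 ^ m) :
    c * (δ / 2 ^ (m + n)) ≤ δ / 2 ^ n := by
  calc c * (δ / 2 ^ (m + n)) ≤ 2 ^ m * (δ / 2 ^ (m + n)) := by gcongr
    _ = δ / 2 ^ n := by rw [pow_add]; field_simp

theorem sum_Icc_one_div_succ_mul_succ_succ (n : ℕ) :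
    ∑ k ∈ Finset.Icc 1 n, (1 : ℝ) / ((k + 1) * (k + 2)) = 1 / 2 - 1 / (n + 2) := by
  induction n with
  | zero => norm_num
  | succ n ih =>
    rw [Finset.sum_Icc_succ_top (by omega), ih]
    push_cast
    field_simp
    ring

/-- The paper's level `ℓ t = max {n | 2 ^ n - 1 ≤ |t|}`. -/
def treeLevel (t : List ℕ) : ℕ := Nat.log 2 (t.length + 1)

theorem pow_treeLevel_le (t : List ℕ) : 2 ^ treeLevel t ≤ t.length + 1 :=
  Nat.pow_log_le_self 2 (Nat.succ_ne_zero t.length)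

theorem isGreatest_treeLevel (t : List ℕ) :
    IsGreatest {n : ℕ | 2 ^ n - 1 ≤ t.length} (treeLevel t) := by
  refine ⟨?_, fun n hn => ?_⟩
  · have := pow_treeLevel_le t
    simp only [Set.mem_ofPred_eq]
    omega
  · have : 2 ^ n ≤ t.length + 1 := by simp only [Set.mem_ofPred_eq] at hn; omega
    simpa [treeLevel, Nat.log_pow] using Nat.log_mono_right (b := 2) this

theorem lt_pow_treeLevel_succ (t : List ℕ) : t.length + 1 < 2 ^ (treeLevel t + 1) :=
  Nat.lt_pow_succ_log_self one_lt_two _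

theorem treeLevel_nil : treeLevel [] = 0 := by simp [treeLevel]

theorem treeLevel_pos {t : List ℕ} (ht : t ≠ []) : 0 < treeLevel t :=
  Nat.log_pos one_lt_two (by have := List.length_pos_iff.mpr ht; omega)

theorem ne_nil_of_treeLevel_pos {t : List ℕ} (ht : 0 < treeLevel t) : t ≠ [] := by
  rintro rfl
  exact lt_irrefl 0 (treeLevel_nil ▸ ht)

theorem treeLevel_le_of_length_le {s t : List ℕ} (h : s.length ≤ t.length) :
    treeLevel s ≤ treeLevel t :=
  Nat.log_mono_right (by omega)

theorem List.IsPrefix.treeLevel_le {s t : List ℕ} (h : s <+: t) : treeLevel s ≤ treeLevel t :=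
  treeLevel_le_of_length_le h.length_le

theorem treeLevel_eq_of_length_mem_Icc {s c t : List ℕ} (hsc : s.length ≤ c.length)
    (hct : c.length ≤ t.length) (hst : treeLevel s = treeLevel t) :
    treeLevel c = treeLevel t :=
  le_antisymm (treeLevel_le_of_length_le hct) (hst ▸ treeLevel_le_of_length_le hsc)

def TreeApart (v w : List ℕ) : Prop :=
  (v <+: w → treeLevel v < treeLevel w) ∧ (w <+: v → treeLevel w < treeLevel v)

theorem TreeApart.ne {v w : List ℕ} (h : TreeApart v w) : v ≠ w := by
  rintro rfl
  exact lt_irrefl _ (h.1 (List.prefix_refl v))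

theorem treeApart_of_not_prefix {v w : List ℕ} (hvw : ¬ v <+: w) (hwv : ¬ w <+: v) :
    TreeApart v w :=
  ⟨fun h => absurd h hvw, fun h => absurd h hwv⟩

theorem treeApart_of_treeLevel_ne {v w : List ℕ} (h : treeLevel v ≠ treeLevel w) :
    TreeApart v w :=
  ⟨fun hp => lt_of_le_of_ne hp.treeLevel_le h,
    fun hp => lt_of_le_of_ne hp.treeLevel_le h.symm⟩

theorem mem_seg {u t w : List ℕ} (hut : u <+: t) : w ∈ seg u t ↔ u <+: w ∧ w <+: t := by
  simp only [seg, Finset.mem_image, Finset.mem_Icc]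
  constructor
  · rintro ⟨k, ⟨huk, -⟩, rfl⟩
    refine ⟨?_, List.take_prefix k t⟩
    rw [List.prefix_iff_eq_take.mp hut]
    exact List.take_isPrefix_take.mpr (Or.inl huk)
  · rintro ⟨huw, hwt⟩
    exact ⟨w.length, ⟨huw.length_le, hwt.length_le⟩, (List.prefix_iff_eq_take.mp hwt).symm⟩

theorem sum_seg_one_div_lt {u t : List ℕ} (hut : u <+: t) :
    ∑ w ∈ seg u t with w ≠ [], (1 : ℝ) / ((w.length + 1) * (w.length + 2)) < 1 / 2 := by
  set S := {w ∈ seg u t | w ≠ []}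
  have hpre : ∀ w ∈ S, w <+: t ∧ w ≠ [] := fun w hw => by
    rw [Finset.mem_filter, mem_seg hut] at hw
    exact ⟨hw.1.2, hw.2⟩
  have hinj : Set.InjOn List.length ↑S := fun w₁ h₁ w₂ h₂ hlen =>
    (List.prefix_of_prefix_length_le (hpre w₁ h₁).1 (hpre w₂ h₂).1 hlen.le).eq_of_length hlen
  have hsub : S.image List.length ⊆ Finset.Icc 1 t.length := by
    simp only [Finset.subset_iff, Finset.mem_image, Finset.mem_Icc]
    rintro _ ⟨w, hw, rfl⟩
    exact ⟨List.length_pos_iff.mpr (hpre w hw).2, (hpre w hw).1.length_le⟩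
  calc ∑ w ∈ S, (1 : ℝ) / ((w.length + 1) * (w.length + 2))
      = ∑ k ∈ S.image List.length, (1 : ℝ) / ((k + 1) * (k + 2)) :=
        (Finset.sum_image (f := fun k : ℕ => (1 : ℝ) / ((k + 1) * (k + 2))) hinj).symm
    _ ≤ ∑ k ∈ Finset.Icc 1 t.length, (1 : ℝ) / ((k + 1) * (k + 2)) :=
        Finset.sum_le_sum_of_subset_of_nonneg hsub fun _ _ _ => by positivity
    _ < 1 / 2 := by
        rw [sum_Icc_one_div_succ_mul_succ_succ]
        have : (0 : ℝ) < 1 / (t.length + 2) := by positivity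
        linarith

theorem abs_le_of_dropLast_chain {f : List ℕ → ℝ} {r : ℝ} {b t : List ℕ} (hbt : b <+: t)
    (hchain : ∀ c, b <+: c → c <+: t → |f c| ≤ r ∨ (c ≠ b ∧ |f c - f c.dropLast| ≤ r)) :
    |f t| ≤ (t.length - b.length + 1) * r := by
  have hb : |f b| ≤ r := by
    rcases hchain b (List.prefix_refl b) hbt with h | ⟨h, -⟩
    · exact h
    · exact absurd rfl h
  have hr : 0 ≤ r := (abs_nonneg _).trans hb
  induction t using List.reverseRecOn with
  | nil =>
    obtain rfl := List.prefix_nil.mp hbt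
    simpa using hb
  | append_singleton l x ih =>
    rcases List.prefix_concat_iff.mp hbt with rfl | hbl
    · simpa using hb
    have ih' := ih hbl fun c hbc hcl => hchain c hbc (hcl.trans (List.prefix_append l [x]))
    have hlen : (b.length : ℝ) ≤ l.length := by exact_mod_cast hbl.length_le
    simp only [List.length_append, List.length_singleton, Nat.cast_add, Nat.cast_one]
    rcases hchain _ hbt (List.prefix_refl _) with h | ⟨-, h⟩
    · exact h.trans (le_mul_of_one_le_left hr (by linarith))
    · rw [List.dropLast_concat] at h
      have htri := abs_sub_abs_le_abs_sub (f (l ++ [x])) (f l)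
      linarith

theorem mul_card_le_sum {ι : Type*} {s : Finset ι} {f : ι → ℝ} {c : ℝ}
    (h : ∀ i ∈ s, c ≤ f i) : c * s.card ≤ ∑ i ∈ s, f i := by
  simpa [nsmul_eq_mul, mul_comm] using s.card_nsmul_le_sum f c h

theorem sum_seg_lt {u t : List ℕ} (hut : u <+: t) {f : List ℕ → ℝ} {δ : ℝ} (hδ : 0 < δ)
    (hf₀ : f [] = 0) (hf : ∀ w ∈ seg u t, w ≠ [] → f w ≤ δ / 2 ^ (2 * treeLevel w + 1)) :
    ∑ w ∈ seg u t, f w < δ := by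
  have hpoint : ∀ w ∈ {w ∈ seg u t | w ≠ []},
      f w ≤ 2 * δ * ((1 : ℝ) / ((w.length + 1) * (w.length + 2))) := fun w hw => by
    rw [Finset.mem_filter] at hw
    refine (hf w hw.1 hw.2).trans ?_
    have hsq : (w.length + 1) * (w.length + 2) ≤ 2 * 2 ^ (2 * treeLevel w + 1) := by
      have := lt_pow_treeLevel_succ w
      calc (w.length + 1) * (w.length + 2) ≤ 2 ^ (treeLevel w + 1) * 2 ^ (treeLevel w + 1) :=
            Nat.mul_le_mul (by omega) (by omega)
        _ = 2 * 2 ^ (2 * treeLevel w + 1) := by ring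
    have hsq' : ((w.length : ℝ) + 1) * (w.length + 2) ≤ 2 * 2 ^ (2 * treeLevel w + 1) := by
      exact_mod_cast hsq
    rw [mul_one_div, div_le_div_iff₀ (by positivity) (by positivity)]
    nlinarith
  calc ∑ w ∈ seg u t, f w = ∑ w ∈ seg u t with w ≠ [], f w :=
        (Finset.sum_filter_of_ne fun w _ hw => by rintro rfl; exact hw hf₀).symm
    _ ≤ ∑ w ∈ seg u t with w ≠ [], 2 * δ * ((1 : ℝ) / ((w.length + 1) * (w.length + 2))) :=
        Finset.sum_le_sum hpoint
    _ < 2 * δ * (1 / 2) := by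
        rw [← Finset.mul_sum]
        exact mul_lt_mul_of_pos_left (sum_seg_one_div_lt hut) (by positivity)
    _ = δ := by ring

/-- Conditions (i)–(v) of Lemma 6.2 on scalar arrays indexed by the tree `List ℕ`: `a t s`
stands for `x**_t(A* y*_s)` and `b s t` for `y*_s(A x_t)`. The tolerance `δ/2^{3L(t)+2}` is
relaxed to `δ/2^{3 max(ℓ s, ℓ t)+2}`, which it implies because `L t` dominates `ℓ s` and `ℓ t`
whenever `N s ≤ N t`. -/
structure IsTreeSystem (N : List ℕ → ℕ) (ε δ : ℝ) (a b : List ℕ → List ℕ → ℝ) : Prop where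
  injective : Function.Injective N
  lt_of_prefix : ∀ s t, s <+: t → s ≠ t → N s < N t
  a_nil_left : ∀ s, a [] s = 0
  a_nil_right : ∀ t, a t [] = 0
  b_nil_left : ∀ t, b [] t = 0
  b_nil_right : ∀ s, b s [] = 0
  sub_lt_diag : ∀ t, t ≠ [] → ε - δ < a t t
  abs_earlier_lt : ∀ s t, s ≠ [] → N s < N t →
    |a s t| < δ / 2 ^ (3 * max (treeLevel s) (treeLevel t) + 2) ∧
    |b t s| < δ / 2 ^ (3 * max (treeLevel s) (treeLevel t) + 2)
  abs_first_lt : ∀ s t, s ≠ [] → N s < N t → t.length + 1 = 2 ^ treeLevel t →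
    |a t s| < δ / 2 ^ (3 * max (treeLevel s) (treeLevel t) + 2)
  abs_sub_dropLast_lt : ∀ s t, s ≠ [] → N s < N t → 2 ^ treeLevel t < t.length + 1 →
    |a t s - a t.dropLast s| < δ / 2 ^ (3 * max (treeLevel s) (treeLevel t) + 2)
  abs_sub_dual_lt : ∀ s t, s ≠ [] → N s ≤ N t →
    |a t s - b s t| < δ / 2 ^ (3 * max (treeLevel s) (treeLevel t) + 2)

namespace IsTreeSystem

variable {N : List ℕ → ℕ} {ε δ : ℝ} {a b : List ℕ → List ℕ → ℝ}

theorem le_of_prefix (h : IsTreeSystem N ε δ a b) {s t : List ℕ} (hst : s <+: t) : N s ≤ N t := by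
  rcases eq_or_ne s t with rfl | hne
  · exact le_rfl
  · exact (h.lt_of_prefix s t hst hne).le

theorem sub_two_mul_le_of_prefix (h : IsTreeSystem N ε δ a b) (hδ : 0 ≤ δ) {s t : List ℕ}
    (hst : s <+: t) (hs : s ≠ []) (hlev : treeLevel s = treeLevel t) :
    ε - 2 * δ ≤ a t s := by
  have hchain := abs_le_of_dropLast_chain (f := fun c => a c s - a s s)
    (r := δ / 2 ^ (3 * treeLevel t + 2)) hst fun c hsc hct => by
      by_cases hcs : c = s
      · subst hcs
        left
        simp only [sub_self, abs_zero]
        positivity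
      right
      have hc := treeLevel_eq_of_length_mem_Icc hsc.length_le hct.length_le hlev
      have hlen : s.length < c.length :=
        lt_of_le_of_ne hsc.length_le fun e => hcs (hsc.eq_of_length e).symm
      have hstep := h.abs_sub_dropLast_lt s c hs (h.lt_of_prefix s c hsc (Ne.symm hcs))
        (by have := pow_treeLevel_le s; rw [hc, ← hlev]; omega)
      rw [hlev, hc, max_self] at hstep
      exact ⟨hcs, by simpa using hstep.le⟩
  have hcount : (t.length - s.length + 1 : ℝ) ≤ 2 ^ (3 * treeLevel t + 2) := by
    have h₁ := lt_pow_treeLevel_succ t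
    have h₂ : 2 ^ (treeLevel t + 1) ≤ 2 ^ (3 * treeLevel t + 2) :=
      Nat.pow_le_pow_right two_pos (by omega)
    have : ((t.length + 1 : ℕ) : ℝ) ≤ 2 ^ (3 * treeLevel t + 2) := by exact_mod_cast by omega
    push_cast at this
    linarith [(s.length.cast_nonneg : (0 : ℝ) ≤ s.length)]
  have herr := mul_div_two_pow_add_le (n := 0) hδ hcount
  have hdiag := h.sub_lt_diag s hs
  simp only [add_zero, pow_zero, div_one] at herr
  linarith [(abs_le.mp (hchain.trans herr)).1]

theorem abs_le_of_lt (h : IsTreeSystem N ε δ a b) (hδ : 0 ≤ δ) {s t : List ℕ} (hs : s ≠ [])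
    (ht : t ≠ []) (hst : N s < N t) (hpre : s <+: t → treeLevel s < treeLevel t) :
    |a t s| ≤ δ / 2 ^ (2 * max (treeLevel s) (treeLevel t) + 2) := by
  set M := max (treeLevel s) (treeLevel t)
  set t₀ := t.take (2 ^ treeLevel t - 1)
  have hpow := pow_treeLevel_le t
  have hpow₁ : 1 ≤ 2 ^ treeLevel t := Nat.one_le_two_pow
  have hlen₀ : t₀.length = 2 ^ treeLevel t - 1 := by simp only [t₀, List.length_take]; omega
  have hlev₀ : treeLevel t₀ = treeLevel t := by
    rw [treeLevel, hlen₀, Nat.sub_add_cancel hpow₁, Nat.log_pow one_lt_two]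
  -- `t₀` is the first node of `t`'s level; each node of the chain from `t₀` to `t` is
  -- controlled by (ii) if it precedes `s`, otherwise by (iii) at `t₀` and by (iv) above it.
  have hchain := abs_le_of_dropLast_chain (f := fun c => a c s) (r := δ / 2 ^ (3 * M + 2))
    (List.take_prefix _ t) fun c hc₀ hct => by
      have hc := treeLevel_eq_of_length_mem_Icc hc₀.length_le hct.length_le hlev₀
      have hcne : c ≠ [] := ne_nil_of_treeLevel_pos (hc ▸ treeLevel_pos ht)
      have hM : max (treeLevel s) (treeLevel c) = M := by rw [hc]
      have hNcs : N c ≠ N s := fun e => by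
        obtain rfl := h.injective e
        exact (hpre hct).ne hc
      rcases hNcs.lt_or_gt with hcs | hsc
      · have := (h.abs_earlier_lt c s hcne hcs).1
        rw [max_comm, hM] at this
        exact Or.inl this.le
      by_cases hc0 : c = t₀
      · subst hc0
        have := h.abs_first_lt s t₀ hs hsc (by rw [hlev₀, hlen₀]; omega)
        rw [hM] at this
        exact Or.inl this.le
      have : t₀.length < c.length :=
        lt_of_le_of_ne hc₀.length_le fun e => hc0 (hc₀.eq_of_length e).symm
      have := h.abs_sub_dropLast_lt s c hs hsc (by rw [hc]; omega)
      rw [hM] at this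
      exact Or.inr ⟨hc0, this.le⟩
  have hcount : (t.length - t₀.length + 1 : ℝ) ≤ 2 ^ M := by
    have h₁ := lt_pow_treeLevel_succ t
    have h₂ : 2 ^ treeLevel t ≤ 2 ^ M := Nat.pow_le_pow_right two_pos (le_max_right _ _)
    rw [pow_succ] at h₁
    have : ((t.length + 1 : ℕ) : ℝ) ≤ ((t₀.length + 2 ^ M : ℕ) : ℝ) := by
      exact_mod_cast by omega
    push_cast at this
    linarith
  calc |a t s| ≤ (t.length - t₀.length + 1) * (δ / 2 ^ (M + (2 * M + 2))) := by
        rw [show M + (2 * M + 2) = 3 * M + 2 by ring]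
        exact hchain
    _ ≤ δ / 2 ^ (2 * M + 2) := mul_div_two_pow_add_le hδ hcount


theorem abs_le_of_treeApart (h : IsTreeSystem N ε δ a b) (hδ : 0 ≤ δ) {v w : List ℕ}
    (hvw : TreeApart v w) :
    |a w v| ≤ δ / 2 ^ (2 * max (treeLevel v) (treeLevel w) + 1) ∧
    |b v w| ≤ δ / 2 ^ (2 * max (treeLevel v) (treeLevel w) + 1) ∧
    |a v w| ≤ δ / 2 ^ (2 * max (treeLevel v) (treeLevel w) + 1) := by
  rcases eq_or_ne v [] with rfl | hv
  · simp only [h.a_nil_left, h.a_nil_right, h.b_nil_left, abs_zero, and_self]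
    positivity
  rcases eq_or_ne w [] with rfl | hw
  · simp only [h.a_nil_left, h.a_nil_right, h.b_nil_right, abs_zero, and_self]
    positivity
  set M := max (treeLevel v) (treeLevel w)
  have hsplit : δ / 2 ^ (2 * M + 2) + δ / 2 ^ (3 * M + 2) ≤ δ / 2 ^ (2 * M + 1) := by
    have := div_two_pow_le_div_two_pow hδ (show 2 * M + 2 ≤ 3 * M + 2 by omega)
    have e : δ / 2 ^ (2 * M + 2) = δ / 2 ^ (2 * M + 1) / 2 := by rw [pow_succ, div_div]
    linarith
  have hle₂ : δ / 2 ^ (2 * M + 2) ≤ δ / 2 ^ (2 * M + 1) := div_two_pow_le_div_two_pow hδ (by omega)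
  have hle₃ : δ / 2 ^ (3 * M + 2) ≤ δ / 2 ^ (2 * M + 1) := div_two_pow_le_div_two_pow hδ (by omega)
  have hN : N v ≠ N w := fun e => hvw.ne (h.injective e)
  rcases hN.lt_or_gt with hlt | hgt
  · have h₁ := h.abs_le_of_lt hδ hv hw hlt hvw.1
    have h₂ := h.abs_sub_dual_lt v w hv hlt.le
    have h₃ := (h.abs_earlier_lt v w hv hlt).1
    have htri := abs_sub_abs_le_abs_sub (b v w) (a w v)
    rw [abs_sub_comm] at htri
    exact ⟨h₁.trans hle₂, by linarith, h₃.le.trans hle₃⟩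
  · have h₁ := h.abs_le_of_lt hδ hw hv hgt hvw.2
    obtain ⟨h₂, h₃⟩ := h.abs_earlier_lt w v hw hgt
    rw [max_comm] at h₁ h₂ h₃
    exact ⟨h₂.le.trans hle₃, h₃.le.trans hle₃, h₁.trans hle₂⟩

theorem card_mul_le_sum_seg_left (h : IsTreeSystem N ε δ a b) (hδ : 0 ≤ δ) {i : ℕ} (hi : 1 ≤ i)
    {u t : List ℕ} (hut : u <+: t) (hlev : ∀ w ∈ seg u t, treeLevel w = i) :
    (ε - 3 * δ) * (seg u t).card ≤ ∑ w ∈ seg u t, a w u ∧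
    (ε - 3 * δ) * (seg u t).card ≤ ∑ w ∈ seg u t, b u w := by
  have hu := hlev u ((mem_seg hut).mpr ⟨List.prefix_refl u, hut⟩)
  have hpoint : ∀ w ∈ seg u t, ε - 2 * δ ≤ a w u ∧ ε - 3 * δ ≤ b u w := fun w hw => by
    have ha := h.sub_two_mul_le_of_prefix hδ ((mem_seg hut).mp hw).1
      (ne_nil_of_treeLevel_pos (by omega)) (by rw [hu, hlev w hw])
    have hdual := h.abs_sub_dual_lt u w (ne_nil_of_treeLevel_pos (by omega))
      (h.le_of_prefix ((mem_seg hut).mp hw).1)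
    have := div_two_pow_le_div_two_pow hδ (Nat.zero_le (3 * max (treeLevel u) (treeLevel w) + 2))
    rw [pow_zero, div_one] at this
    exact ⟨ha, by linarith [(abs_lt.mp hdual).2]⟩
  exact ⟨mul_card_le_sum fun w hw => by linarith [(hpoint w hw).1],
    mul_card_le_sum fun w hw => (hpoint w hw).2⟩

theorem card_mul_le_sum_seg_right (h : IsTreeSystem N ε δ a b) (hδ : 0 ≤ δ) {i : ℕ}
    (hi : 1 ≤ i) {u t : List ℕ} (hut : u <+: t) (hlev : ∀ w ∈ seg u t, treeLevel w = i) :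
    (ε - 3 * δ) * (seg u t).card ≤ ∑ w ∈ seg u t, a t w := by
  have ht := hlev t ((mem_seg hut).mpr ⟨hut, List.prefix_refl t⟩)
  refine mul_card_le_sum fun w hw => ?_
  have := h.sub_two_mul_le_of_prefix hδ ((mem_seg hut).mp hw).2
    (ne_nil_of_treeLevel_pos (by rw [hlev w hw]; omega)) (by rw [ht, hlev w hw])
  linarith

theorem abs_lt_of_treeApart (h : IsTreeSystem N ε δ a b) (hδ : 0 < δ) {v w : List ℕ}
    (hvw : TreeApart v w) :
    |a w v| < δ / 2 ^ max (treeLevel v) (treeLevel w) ∧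
    |b v w| < δ / 2 ^ max (treeLevel v) (treeLevel w) := by
  have hlt : δ / 2 ^ (2 * max (treeLevel v) (treeLevel w) + 1) <
      δ / 2 ^ max (treeLevel v) (treeLevel w) :=
    div_lt_div_of_pos_left hδ (by positivity) (pow_lt_pow_right₀ one_lt_two (by omega))
  obtain ⟨h₁, h₂, -⟩ := h.abs_le_of_treeApart hδ.le hvw
  exact ⟨h₁.trans_lt hlt, h₂.trans_lt hlt⟩

theorem sum_seg_lt_of_treeApart (h : IsTreeSystem N ε δ a b) (hδ : 0 < δ) {u t : List ℕ}
    (hut : u <+: t) {v : List ℕ} (hv : ∀ w ∈ seg u t, TreeApart v w) :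
    ∑ w ∈ seg u t, |a w v| < δ ∧ ∑ w ∈ seg u t, |b v w| < δ ∧
    ∑ w ∈ seg u t, |a v w| < δ := by
  have hbound : ∀ w ∈ seg u t, δ / 2 ^ (2 * max (treeLevel v) (treeLevel w) + 1) ≤
      δ / 2 ^ (2 * treeLevel w + 1) := fun w _ =>
    div_two_pow_le_div_two_pow hδ.le (by have := le_max_right (treeLevel v) (treeLevel w); omega)
  refine ⟨sum_seg_lt hut hδ (by simp [h.a_nil_left]) fun w hw _ => ?_,
    sum_seg_lt hut hδ (by simp [h.b_nil_right]) fun w hw _ => ?_,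
    sum_seg_lt hut hδ (by simp [h.a_nil_right]) fun w hw _ => ?_⟩
  · exact (h.abs_le_of_treeApart hδ.le (hv w hw)).1.trans (hbound w hw)
  · exact (h.abs_le_of_treeApart hδ.le (hv w hw)).2.1.trans (hbound w hw)
  · exact (h.abs_le_of_treeApart hδ.le (hv w hw)).2.2.trans (hbound w hw)

end IsTreeSystem

theorem statement14_general (A : X →L[ℝ] Y) (ε δ : ℝ) (hδ : 0 < δ)
    (N : List ℕ → ℕ) (hNbij : Function.Bijective N)
    (hNmono : ∀ s t : List ℕ, s <+: t → s ≠ t → N s < N t)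
    (ℓ L : List ℕ → ℕ)
    (hℓ : ∀ t : List ℕ, IsGreatest {n : ℕ | 2 ^ n - 1 ≤ t.length} (ℓ t))
    (hL : ∀ t : List ℕ, IsGreatest {m : ℕ | ∃ s : List ℕ, N s ≤ N t ∧ ℓ s = m} (L t))
    (x : List ℕ → X) (ys : List ℕ → StrongDual ℝ Y) (xss : List ℕ → StrongDual ℝ (StrongDual ℝ X))
    (hx0 : x [] = 0) (hys0 : ys [] = 0) (hxss0 : xss [] = 0)
    (h1 : ∀ t : List ℕ, t ≠ [] → ε - δ < xss t (opAdjoint A (ys t)))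
    (h2 : ∀ t s : List ℕ, s ≠ [] → N s < N t →
      |xss s (opAdjoint A (ys t))| < δ / 2 ^ (3 * L t + 2) ∧
      |ys t (A (x s))| < δ / 2 ^ (3 * L t + 2))
    (h3 : ∀ t : List ℕ, (∃ n : ℕ, t.length = 2 ^ n - 1) →
      ∀ s : List ℕ, s ≠ [] → N s < N t →
        |xss t (opAdjoint A (ys s))| < δ / 2 ^ (3 * L t + 2))
    (h4 : ∀ t : List ℕ, (∃ n : ℕ, 2 ^ n - 1 < t.length ∧ t.length < 2 ^ (n + 1) - 1) →
      ∀ s : List ℕ, s ≠ [] → N s < N t →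
        |xss t (opAdjoint A (ys s)) - xss t.dropLast (opAdjoint A (ys s))| <
          δ / 2 ^ (3 * L t + 2))
    (h5 : ∀ t s : List ℕ, s ≠ [] → N s ≤ N t →
      |xss t (opAdjoint A (ys s)) - ys s (A (x t))| < δ / 2 ^ (3 * L t + 2)) :
    (∀ i : ℕ, 1 ≤ i → ∀ u t : List ℕ, u <+: t → (∀ w ∈ seg u t, ℓ w = i) →
      (ε - 3 * δ) * (seg u t).card ≤ ∑ w ∈ seg u t, xss w (opAdjoint A (ys u)) ∧
      (ε - 3 * δ) * (seg u t).card ≤ ∑ w ∈ seg u t, ys u (A (x w))) ∧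
    (∀ i : ℕ, 1 ≤ i → ∀ u t : List ℕ, u <+: t → (∀ w ∈ seg u t, ℓ w = i) →
      (ε - 3 * δ) * (seg u t).card ≤ ∑ w ∈ seg u t, xss t (opAdjoint A (ys w))) ∧
    (∀ v w : List ℕ, ((¬ v <+: w ∧ ¬ w <+: v) ∨ ℓ w ≠ ℓ v) →
      |xss w (opAdjoint A (ys v))| < δ / 2 ^ max (ℓ v) (ℓ w) ∧
      |ys v (A (x w))| < δ / 2 ^ max (ℓ v) (ℓ w)) ∧
    (∀ u t : List ℕ, u <+: t → ∀ v : List ℕ,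
      ((∀ w ∈ seg u t, (w <+: v ∧ w ≠ v) ∧ ℓ w < ℓ v) ∨
       (∀ w ∈ seg u t, (v <+: w ∧ v ≠ w) ∧ ℓ v < ℓ w) ∨
       (∀ w ∈ seg u t, ¬ w <+: v ∧ ¬ v <+: w)) →
      (∑ w ∈ seg u t, |xss w (opAdjoint A (ys v))|) < δ ∧
      (∑ w ∈ seg u t, |ys v (A (x w))|) < δ ∧
      (∑ w ∈ seg u t, |xss v (opAdjoint A (ys w))|) < δ) := by
  obtain rfl : ℓ = treeLevel := funext fun t => (hℓ t).unique (isGreatest_treeLevel t)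
  have hL_tol : ∀ s t, N s ≤ N t → δ / 2 ^ (3 * L t + 2) ≤
      δ / 2 ^ (3 * max (treeLevel s) (treeLevel t) + 2) := fun s t hst => by
    have := (hL t).2 ⟨s, hst, rfl⟩
    have := (hL t).2 ⟨t, le_rfl, rfl⟩
    exact div_two_pow_le_div_two_pow hδ.le (by omega)
  have hsys : IsTreeSystem N ε δ (fun t s => xss t (opAdjoint A (ys s)))
      (fun s t => ys s (A (x t))) :=
    { injective := hNbij.1
      lt_of_prefix := hNmono
      a_nil_left := by simp [hxss0]
      a_nil_right := by simp [hys0]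
      b_nil_left := by simp [hys0]
      b_nil_right := by simp [hx0]
      sub_lt_diag := h1
      abs_earlier_lt := fun s t hs hst =>
        (h2 t s hs hst).imp (·.trans_le (hL_tol s t hst.le)) (·.trans_le (hL_tol s t hst.le))
      abs_first_lt := fun s t hs hst hfirst =>
        (h3 t ⟨treeLevel t, by omega⟩ s hs hst).trans_le (hL_tol s t hst.le)
      abs_sub_dropLast_lt := fun s t hs hst hmid =>
        (h4 t ⟨treeLevel t, by have := lt_pow_treeLevel_succ t; omega⟩ s hs hst).trans_le
          (hL_tol s t hst.le)
      abs_sub_dual_lt := fun s t hs hst => (h5 t s hs hst).trans_le (hL_tol s t hst) }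
  refine ⟨fun i hi u t hut hlev => hsys.card_mul_le_sum_seg_left hδ.le hi hut hlev,
    fun i hi u t hut hlev => hsys.card_mul_le_sum_seg_right hδ.le hi hut hlev,
    fun v w hvw => hsys.abs_lt_of_treeApart hδ ?_,
    fun u t hut v hv => hsys.sum_seg_lt_of_treeApart hδ hut fun w hw => ?_⟩
  · rcases hvw with ⟨hvw, hwv⟩ | hne
    · exact treeApart_of_not_prefix hvw hwv
    · exact treeApart_of_treeLevel_ne (Ne.symm hne)
  · rcases hv with hv | hv | hv
    · exact treeApart_of_treeLevel_ne (hv w hw).2.ne'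
    · exact treeApart_of_treeLevel_ne (hv w hw).2.ne
    · exact treeApart_of_not_prefix (hv w hw).2 (hv w hw).1

/-- Proposition 6.4 of the paper: the estimates satisfied by the
collections produced by the tree construction lemma (Lemma 6.2); `N` is a bijective
enumeration of `T` compatible with the prefix order, `ℓ t = max{n : 2^n − 1 ≤ |t|}`,
`L t = max{ℓ s : N s ≤ N t}`, and the level sets are `L_i = {t : ℓ t = i}`. -/
theorem statement14 (A : X →L[ℝ] Y) (ε δ : ℝ) (hε : 0 < ε) (hδ : 0 < δ)
    (N : List ℕ → ℕ) (hNbij : Function.Bijective N)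
    (hNmono : ∀ s t : List ℕ, s <+: t → s ≠ t → N s < N t)
    (ℓ L : List ℕ → ℕ)
    (hℓ : ∀ t : List ℕ, IsGreatest {n : ℕ | 2 ^ n - 1 ≤ t.length} (ℓ t))
    (hL : ∀ t : List ℕ, IsGreatest {m : ℕ | ∃ s : List ℕ, N s ≤ N t ∧ ℓ s = m} (L t))
    (x : List ℕ → X) (ys : List ℕ → StrongDual ℝ Y) (xss : List ℕ → StrongDual ℝ (StrongDual ℝ X))
    (hxb : ∀ t, ‖x t‖ ≤ 1) (hysb : ∀ t, ‖ys t‖ ≤ 1) (hxssb : ∀ t, ‖xss t‖ ≤ 1)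
    (hx0 : x [] = 0) (hys0 : ys [] = 0) (hxss0 : xss [] = 0)
    (h1 : ∀ t : List ℕ, t ≠ [] → ε - δ < xss t (opAdjoint A (ys t)))
    (h2 : ∀ t s : List ℕ, s ≠ [] → N s < N t →
      |xss s (opAdjoint A (ys t))| < δ / 2 ^ (3 * L t + 2) ∧
      |ys t (A (x s))| < δ / 2 ^ (3 * L t + 2))
    (h3 : ∀ t : List ℕ, (∃ n : ℕ, t.length = 2 ^ n - 1) →
      ∀ s : List ℕ, s ≠ [] → N s < N t →
        |xss t (opAdjoint A (ys s))| < δ / 2 ^ (3 * L t + 2))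
    (h4 : ∀ t : List ℕ, (∃ n : ℕ, 2 ^ n - 1 < t.length ∧ t.length < 2 ^ (n + 1) - 1) →
      ∀ s : List ℕ, s ≠ [] → N s < N t →
        |xss t (opAdjoint A (ys s)) - xss t.dropLast (opAdjoint A (ys s))| <
          δ / 2 ^ (3 * L t + 2))
    (h5 : ∀ t s : List ℕ, s ≠ [] → N s ≤ N t →
      |xss t (opAdjoint A (ys s)) - ys s (A (x t))| < δ / 2 ^ (3 * L t + 2)) :
    (∀ i : ℕ, 1 ≤ i → ∀ u t : List ℕ, u <+: t → (∀ w ∈ seg u t, ℓ w = i) →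
      (ε - 3 * δ) * (seg u t).card ≤ ∑ w ∈ seg u t, xss w (opAdjoint A (ys u)) ∧
      (ε - 3 * δ) * (seg u t).card ≤ ∑ w ∈ seg u t, ys u (A (x w))) ∧
    (∀ i : ℕ, 1 ≤ i → ∀ u t : List ℕ, u <+: t → (∀ w ∈ seg u t, ℓ w = i) →
      (ε - 3 * δ) * (seg u t).card ≤ ∑ w ∈ seg u t, xss t (opAdjoint A (ys w))) ∧
    (∀ v w : List ℕ, ((¬ v <+: w ∧ ¬ w <+: v) ∨ ℓ w ≠ ℓ v) →
      |xss w (opAdjoint A (ys v))| < δ / 2 ^ max (ℓ v) (ℓ w) ∧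
      |ys v (A (x w))| < δ / 2 ^ max (ℓ v) (ℓ w)) ∧
    (∀ u t : List ℕ, u <+: t → ∀ v : List ℕ,
      ((∀ w ∈ seg u t, (w <+: v ∧ w ≠ v) ∧ ℓ w < ℓ v) ∨
       (∀ w ∈ seg u t, (v <+: w ∧ v ≠ w) ∧ ℓ v < ℓ w) ∨
       (∀ w ∈ seg u t, ¬ w <+: v ∧ ¬ v <+: w)) →
      (∑ w ∈ seg u t, |xss w (opAdjoint A (ys v))|) < δ ∧
      (∑ w ∈ seg u t, |ys v (A (x w))|) < δ ∧
      (∑ w ∈ seg u t, |xss v (opAdjoint A (ys w))|) < δ) :=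
  statement14_general A ε δ hδ N hNbij hNmono ℓ L hℓ hL x ys xss hx0 hys0 hxss0 h1 h2 h3 h4 h5
end
end

section
/- Let ξ be a limit ordinal and suppose that for every ζ < ξ there are ordinals ξ_{0,ζ} and ξ_{1,ζ} with ξ_{0,ζ} ⊕ ξ_{1,ζ} = ζ + 1, where ⊕ denotes the Hessenberg (natural) sum. Then there exist a set S ⊆ [0, ξ), ordinals ξ₀ and ξ₁ with ξ₀ ⊕ ξ₁ = ξ, and ε ∈ {0, 1} such that ξ_ε is a limit ordinal, sup_{ζ∈S} ξ_{ε,ζ} ≥ ξ_ε, and ξ_{1−ε,ζ} ≥ ξ_{1−ε} for every ζ ∈ S. -/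
namespace Ordinal

universe u

/-- `Ordinal.IsLimit` as in the older Mathlib (removed since): a nonzero ordinal closed
under successor. -/
def IsLimit (o : Ordinal) : Prop := o ≠ 0 ∧ ∀ a < o, Order.succ a < o

/-- Natural (Hessenberg) addition, with the definition of the older Mathlib
(`Mathlib.SetTheory.Ordinal.NaturalOps`, removed since). -/
noncomputable def nadd : Ordinal.{u} → Ordinal.{u} → Ordinal.{u}
  | a, b =>
    max (blsub.{u, u} a fun a' _ => nadd a' b) (blsub.{u, u} b fun b' _ => nadd a b')
termination_by o₁ o₂ => (o₁, o₂)

end Ordinal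

infixl:65 " ♯ " => Ordinal.nadd

open Ordinal

/-!
Write `ξ = ω ^ γ * q + ω ^ γ` with `γ ≠ 0` (the last term of its Cantor normal form) and
`W = ω ^ γ`. Since `W` is closed under `♯`, natural addition splits along division by `W`:
`(x ♯ y) / W = x / W ♯ y / W` and `(x ♯ y) % W = x % W ♯ y % W`. Hence for `ζ ∈ [W * q, ξ)`
the quotients satisfy `f0 ζ / W ♯ f1 ζ / W = q`. As `q` has only finitely many decompositions,
one pair of quotients `(p₀, p₁)` occurs on a set `S` cofinal in `ξ`. On `S` the remainders add
up to `(ζ + 1) % W`, which is unbounded below `W`; as `W` is closed under `♯`, one of the two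
families of remainders, say the first, has supremum `W`, and then `ξ₀ = W * p₀ + W` and
`ξ₁ = W * p₁` work.
-/

open Order Set

theorem Set.Finite.exists_cofinal_fiber {α ι : Type*} [LinearOrder α] {ξ : α} {s : Set α}
    {g : α → ι} {F : Set ι} (hF : F.Finite) (hg : MapsTo g s F) (hs : s.Nonempty)
    (hcof : ∀ b < ξ, ∃ ζ ∈ s, b ≤ ζ) : ∃ p ∈ F, ∀ b < ξ, ∃ ζ ∈ s, g ζ = p ∧ b ≤ ζ := by
  obtain ⟨ζ₀, hζ₀⟩ := hs
  have : Nonempty α := ⟨ζ₀⟩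
  by_contra! h
  choose! B hBξ hB using h
  obtain ⟨p, hp, hmax⟩ := exists_max_image F B hF ⟨g ζ₀, hg hζ₀⟩
  obtain ⟨ζ, hζ, hle⟩ := hcof (B p) (hBξ p hp)
  exact (hB (g ζ) (hg hζ) ζ hζ rfl).not_ge ((hmax _ (hg hζ)).trans hle)

namespace Ordinal

theorem isLimit_iff_isSuccLimit {o : Ordinal} : o.IsLimit ↔ IsSuccLimit o := by
  rw [isSuccLimit_iff, isSuccPrelimit_iff_succ_lt]; rfl

theorem lt_nadd_iff {a b c : Ordinal} :
    c < a ♯ b ↔ (∃ a' < a, c ≤ a' ♯ b) ∨ ∃ b' < b, c ≤ a ♯ b' := by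
  rw [nadd]; simp [lt_blsub_iff]

theorem nadd_le_iff {a b c : Ordinal} :
    a ♯ b ≤ c ↔ (∀ a' < a, a' ♯ b < c) ∧ ∀ b' < b, a ♯ b' < c := by
  rw [nadd]; simp [blsub_le_iff]

theorem eq_nadd_of_lt_iff {G : Ordinal → Ordinal → Ordinal}
    (hG : ∀ a b c, c < G a b ↔ (∃ a' < a, c ≤ G a' b) ∨ ∃ b' < b, c ≤ G a b') (a b : Ordinal) :
    G a b = a ♯ b := by
  induction a using WellFoundedLT.induction generalizing b with | _ a iha =>
  induction b using WellFoundedLT.induction with | _ b ihb =>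
  refine eq_of_forall_lt_iff fun c => ?_
  rw [hG, lt_nadd_iff]
  exact or_congr (exists_congr fun a' => and_congr_right fun ha' => by rw [iha a' ha'])
    (exists_congr fun b' => and_congr_right fun hb' => by rw [ihb b' hb'])

theorem nadd_comm (a b : Ordinal) : a ♯ b = b ♯ a :=
  (eq_nadd_of_lt_iff (G := fun a b => b ♯ a) (fun _ _ _ => by rw [lt_nadd_iff, or_comm]) a b).symm

theorem strictMono_nadd_left (a : Ordinal) : StrictMono (a ♯ ·) :=
  fun _ _ h => lt_nadd_iff.2 (Or.inr ⟨_, h, le_rfl⟩)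

theorem strictMono_nadd_right (b : Ordinal) : StrictMono (· ♯ b) :=
  fun _ _ h => lt_nadd_iff.2 (Or.inl ⟨_, h, le_rfl⟩)

theorem nadd_le_nadd {a b c d : Ordinal} (hab : a ≤ b) (hcd : c ≤ d) : a ♯ c ≤ b ♯ d :=
  ((strictMono_nadd_right c).monotone hab).trans ((strictMono_nadd_left b).monotone hcd)

theorem le_nadd_self (a b : Ordinal) : b ≤ a ♯ b := (strictMono_nadd_left a).le_apply

theorem le_self_nadd (a b : Ordinal) : a ≤ a ♯ b := (strictMono_nadd_right b).le_apply

@[simp]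
theorem nadd_zero (a : Ordinal) : a ♯ 0 = a := by
  induction a using WellFoundedLT.induction with | _ a ih =>
  exact le_antisymm (nadd_le_iff.2 ⟨fun a' ha' => by rwa [ih a' ha'], by simp⟩) (le_self_nadd a 0)

theorem nadd_add_one (a b : Ordinal) : a ♯ (b + 1) = a ♯ b + 1 := by
  simp only [← succ_eq_add_one]
  induction a using WellFoundedLT.induction with | _ a ih =>
  refine le_antisymm (nadd_le_iff.2 ⟨fun a' ha' => ?_, fun b' hb' => ?_⟩)
    (succ_le_of_lt (strictMono_nadd_left a (lt_succ b)))
  · rw [ih a' ha', succ_lt_succ_iff]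
    exact strictMono_nadd_right b ha'
  · exact lt_succ_of_le ((strictMono_nadd_left a).monotone (le_of_lt_succ hb'))

theorem add_one_nadd (a b : Ordinal) : (a + 1) ♯ b = a ♯ b + 1 := by
  rw [nadd_comm, nadd_add_one, nadd_comm]

theorem nadd_natCast (a : Ordinal) (n : ℕ) : a ♯ n = a + n := by
  induction n with
  | zero => simp
  | succ n ih => rw [Nat.cast_succ, ← add_assoc, nadd_add_one, ih]

theorem mul_add_div_of_lt {W r : Ordinal} (a : Ordinal) (hr : r < W) : (W * a + r) / W = a := by
  rw [mul_add_div a (pos_of_gt hr).ne', div_eq_zero_of_lt hr, add_zero]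

theorem mul_add_mod_of_lt {W r : Ordinal} (a : Ordinal) (hr : r < W) : (W * a + r) % W = r := by
  rw [mul_add_mod_self, mod_eq_of_lt hr]

theorem mul_add_lt_mul_add {W u u' v v' : Ordinal} (hv : v < W) (hu : u < u') :
    W * u + v < W * u' + v' :=
  calc W * u + v < W * succ u := by rw [mul_succ]; exact add_lt_add_right hv _
    _ ≤ W * u' := mul_le_mul_right (succ_le_of_lt hu) W
    _ ≤ W * u' + v' := le_self_add

theorem mul_add_lt_mul_add_iff {W u u' v v' : Ordinal} (hv : v < W) (hv' : v' < W) :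
    W * u + v < W * u' + v' ↔ u < u' ∨ u = u' ∧ v < v' := by
  refine ⟨fun h => ?_, ?_⟩
  · rcases lt_trichotomy u u' with hu | rfl | hu
    · exact Or.inl hu
    · exact Or.inr ⟨rfl, (add_lt_add_iff_left _).1 h⟩
    · exact absurd h (mul_add_lt_mul_add hv' hu).asymm
  · rintro (hu | ⟨rfl, hv⟩)
    · exact mul_add_lt_mul_add hv hu
    · exact add_lt_add_right hv _

theorem lt_iff_div_lt_or_div_eq_and_mod_lt {W x y : Ordinal} (hW : W ≠ 0) :
    x < y ↔ x / W < y / W ∨ x / W = y / W ∧ x % W < y % W := by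
  rw [← mul_add_lt_mul_add_iff (mod_lt x hW) (mod_lt y hW), div_add_mod, div_add_mod]

theorem IsPrincipal.nadd_eq {W : Ordinal} (hW : IsPrincipal (· ♯ ·) W) (hW0 : W ≠ 0)
    (x y : Ordinal) : x ♯ y = W * (x / W ♯ y / W) + (x % W ♯ y % W) := by
  set G : Ordinal → Ordinal → Ordinal := fun x y => W * (x / W ♯ y / W) + (x % W ♯ y % W)
  have hmod (x y : Ordinal) : x % W ♯ y % W < W := hW (mod_lt x hW0) (mod_lt y hW0)
  have hG_left (a r y : Ordinal) (hr : r < W) :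
      G (W * a + r) y = W * (a ♯ y / W) + (r ♯ y % W) := by
    simp only [G, mul_add_div_of_lt a hr, mul_add_mod_of_lt a hr]
  have hG_right (x b s : Ordinal) (hs : s < W) :
      G x (W * b + s) = W * (x / W ♯ b) + (x % W ♯ s) := by
    simp only [G, mul_add_div_of_lt b hs, mul_add_mod_of_lt b hs]
  refine (eq_nadd_of_lt_iff (G := G) (fun x y c => ⟨fun hc => ?_, ?_⟩) x y).symm
  · have hx := div_add_mod x W
    have hy := div_add_mod y W
    rw [← div_add_mod c W] at hc ⊢
    rcases (mul_add_lt_mul_add_iff (mod_lt c hW0) (hmod x y)).1 hc with hq | ⟨hq, hr⟩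
    · rcases lt_nadd_iff.1 hq with ⟨a, ha, hle⟩ | ⟨b, hb, hle⟩
      · refine Or.inl ⟨W * a + c % W, (mul_add_lt_mul_add (mod_lt c hW0) ha).trans_eq hx, ?_⟩
        rw [hG_left _ _ _ (mod_lt c hW0)]
        exact add_le_add (mul_le_mul_right hle W) (le_self_nadd _ _)
      · refine Or.inr ⟨W * b + c % W, (mul_add_lt_mul_add (mod_lt c hW0) hb).trans_eq hy, ?_⟩
        rw [hG_right _ _ _ (mod_lt c hW0)]
        exact add_le_add (mul_le_mul_right hle W) (le_nadd_self _ _)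
    · rw [hq]
      rcases lt_nadd_iff.1 hr with ⟨r, hr, hle⟩ | ⟨s, hs, hle⟩
      · refine Or.inl ⟨W * (x / W) + r, (add_lt_add_right hr _).trans_eq hx, ?_⟩
        rw [hG_left _ _ _ (hr.trans (mod_lt x hW0))]
        exact add_le_add_right hle _
      · refine Or.inr ⟨W * (y / W) + s, (add_lt_add_right hs _).trans_eq hy, ?_⟩
        rw [hG_right _ _ _ (hs.trans (mod_lt y hW0))]
        exact add_le_add_right hle _
  · rintro (⟨x', hx', hc⟩ | ⟨y', hy', hc⟩) <;> refine hc.trans_lt ?_ <;>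
      refine (mul_add_lt_mul_add_iff (hmod _ _) (hmod _ _)).2 ?_
    · rcases (lt_iff_div_lt_or_div_eq_and_mod_lt hW0).1 hx' with hq | ⟨hq, hr⟩
      · exact Or.inl (strictMono_nadd_right _ hq)
      · exact Or.inr ⟨by rw [hq], strictMono_nadd_right _ hr⟩
    · rcases (lt_iff_div_lt_or_div_eq_and_mod_lt hW0).1 hy' with hq | ⟨hq, hr⟩
      · exact Or.inl (strictMono_nadd_left _ hq)
      · exact Or.inr ⟨by rw [hq], strictMono_nadd_left _ hr⟩

theorem IsPrincipal.nadd_div {W : Ordinal} (hW : IsPrincipal (· ♯ ·) W) (hW0 : W ≠ 0)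
    (x y : Ordinal) : (x ♯ y) / W = x / W ♯ y / W := by
  rw [hW.nadd_eq hW0, mul_add_div_of_lt _ (hW (mod_lt x hW0) (mod_lt y hW0))]

theorem IsPrincipal.nadd_mod {W : Ordinal} (hW : IsPrincipal (· ♯ ·) W) (hW0 : W ≠ 0)
    (x y : Ordinal) : (x ♯ y) % W = x % W ♯ y % W := by
  rw [hW.nadd_eq hW0, mul_add_mod_of_lt _ (hW (mod_lt x hW0) (mod_lt y hW0))]

theorem IsPrincipal.mul_nadd_mul {W : Ordinal} (hW : IsPrincipal (· ♯ ·) W) (hW0 : W ≠ 0)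
    (a b : Ordinal) : W * a ♯ W * b = W * (a ♯ b) := by
  rw [hW.nadd_eq hW0, mul_div_cancel a hW0, mul_div_cancel b hW0, mul_mod, mul_mod, nadd_zero,
    add_zero]

theorem isPrincipal_nadd_omega0 : IsPrincipal (· ♯ ·) ω := by
  intro a b ha hb
  obtain ⟨n, rfl⟩ := lt_omega0.1 hb
  show a ♯ n < ω
  rw [nadd_natCast]
  exact isPrincipal_add_omega0 ha hb

theorem isPrincipal_nadd_omega0_opow (γ : Ordinal) : IsPrincipal (· ♯ ·) (ω ^ γ) := by
  induction γ using WellFoundedLT.induction with | _ γ ih =>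
  intro a b ha hb
  rcases eq_or_ne γ 0 with rfl | hγ
  · rw [opow_zero, lt_one_iff] at ha hb
    simp [ha, hb]
  obtain ⟨c₁, hc₁, m, ha⟩ := (lt_omega0_opow hγ).1 ha
  obtain ⟨c₂, hc₂, n, hb⟩ := (lt_omega0_opow hγ).1 hb
  set c := max c₁ c₂
  have hV0 : ω ^ c ≠ 0 := opow_ne_zero _ omega0_ne_zero
  have hV := ih c (max_lt hc₁ hc₂)
  have hdiv {x c' : Ordinal} {k : ℕ} (hc' : c' ≤ c) (hx : x < ω ^ c' * k) : x / ω ^ c < ω :=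
    ((lt_mul_iff_div_lt hV0).1 <| hx.trans_le <|
      mul_le_mul_left (opow_le_opow_right omega0_pos hc') _).trans (natCast_lt_omega0 k)
  calc a ♯ b = ω ^ c * (a / ω ^ c ♯ b / ω ^ c) + (a % ω ^ c ♯ b % ω ^ c) := hV.nadd_eq hV0 a b
    _ < ω ^ c * succ (a / ω ^ c ♯ b / ω ^ c) := by
      rw [mul_succ]; exact add_lt_add_right (hV (mod_lt a hV0) (mod_lt b hV0)) _
    _ < ω ^ c * ω := by
      gcongr
      exact isSuccLimit_omega0.succ_lt
        (isPrincipal_nadd_omega0 (hdiv (le_max_left _ _) ha) (hdiv (le_max_right _ _) hb))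
    _ = ω ^ succ c := (opow_succ _ _).symm
    _ ≤ ω ^ γ := opow_le_opow_right omega0_pos (succ_le_of_lt (max_lt hc₁ hc₂))

theorem finite_Iic_of_lt_omega0 {o : Ordinal} (ho : o < ω) : (Iic o).Finite := by
  obtain ⟨n, rfl⟩ := lt_omega0.1 ho
  rw [← Iio_succ, succ_eq_add_one, ← Nat.cast_add_one, ← natCast_image_Iio]
  exact (finite_Iio _).image _

theorem finite_setOf_nadd_eq (c : Ordinal) :
    {x : Ordinal × Ordinal | x.1 ♯ x.2 = c}.Finite := by
  have h_of_lt_omega0 {c : Ordinal} (hc : c < ω) :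
      {x : Ordinal × Ordinal | x.1 ♯ x.2 = c}.Finite :=
    ((finite_Iic_of_lt_omega0 hc).prod (finite_Iic_of_lt_omega0 hc)).subset
      fun x (hx : x.1 ♯ x.2 = c) => ⟨hx ▸ le_self_nadd _ _, hx ▸ le_nadd_self _ _⟩
  induction c using WellFoundedLT.induction with | _ c ih =>
  rcases eq_or_ne c 0 with rfl | hc0
  · exact h_of_lt_omega0 omega0_pos
  set V := ω ^ log ω c
  have hV := isPrincipal_nadd_omega0_opow (log ω c)
  have hV0 : V ≠ 0 := opow_ne_zero _ omega0_ne_zero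
  refine (((h_of_lt_omega0 (div_opow_log_lt c one_lt_omega0)).prod
    (ih _ (mod_opow_log_lt_self ω hc0))).image
      fun p => (V * p.1.1 + p.2.1, V * p.1.2 + p.2.2)).subset ?_
  rintro ⟨a, b⟩ (rfl : a ♯ b = c)
  exact ⟨((a / V, b / V), (a % V, b % V)),
    ⟨(hV.nadd_div hV0 a b).symm, (hV.nadd_mod hV0 a b).symm⟩, by simp only [div_add_mod]⟩

theorem exists_eq_omega0_opow_mul_add_one {ξ : Ordinal} (hξ : ξ ≠ 0) :
    ∃ γ q : Ordinal, ξ = ω ^ γ * (q + 1) := by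
  induction ξ using WellFoundedLT.induction with | _ ξ ih =>
  set L := log ω ξ
  have hV0 : ω ^ L ≠ 0 := opow_ne_zero _ omega0_ne_zero
  have hξ_eq := div_add_mod ξ (ω ^ L)
  rcases eq_or_ne (ξ % ω ^ L) 0 with hm | hm
  · have hn : ξ / ω ^ L ≠ 0 := by
      intro hn; rw [hn, hm, mul_zero, add_zero] at hξ_eq; exact hξ hξ_eq.symm
    rcases zero_or_succ_or_isSuccLimit (ξ / ω ^ L) with hn' | ⟨k, hk⟩ | hlim
    · exact absurd hn' hn
    · exact ⟨L, k, by rw [← succ_eq_add_one, hk]; simpa [hm] using hξ_eq.symm⟩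
    · exact absurd (div_opow_log_lt ξ one_lt_omega0) (omega0_le_of_isSuccLimit hlim).not_gt
  · obtain ⟨γ, q, hq⟩ := ih _ (mod_opow_log_lt_self ω hξ) hm
    have hγ : γ ≤ L := by
      refine ((opow_lt_opow_iff_right one_lt_omega0).1 ?_).le
      calc ω ^ γ ≤ ω ^ γ * (q + 1) := le_mul_left _ (zero_lt_one.trans_le le_add_self)
        _ = ξ % ω ^ L := hq.symm
        _ < ω ^ L := mod_lt ξ hV0
    refine ⟨γ, ω ^ (L - γ) * (ξ / ω ^ L) + q, ?_⟩
    rw [add_assoc, mul_add, ← hq, ← mul_assoc, ← opow_add, Ordinal.add_sub_cancel_of_le hγ,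
      hξ_eq]

theorem exists_eq_omega0_opow_mul_add_self {ξ : Ordinal} (hξ : IsSuccLimit ξ) :
    ∃ γ q : Ordinal, γ ≠ 0 ∧ ξ = ω ^ γ * q + ω ^ γ := by
  obtain ⟨γ, q, rfl⟩ := exists_eq_omega0_opow_mul_add_one hξ.ne_bot
  refine ⟨γ, q, ?_, mul_add_one _ _⟩
  rintro rfl
  rw [opow_zero, one_mul] at hξ
  exact not_isSuccLimit_add_one q hξ

theorem add_one_div_eq_of_mem_Ico {W q ζ : Ordinal} (hW : IsSuccLimit W)
    (hζ : ζ ∈ Ico (W * q) (W * q + W)) : (ζ + 1) / W = q :=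
  div_eq (hζ.1.trans le_self_add)
    (by rw [mul_add_one, ← succ_eq_add_one]; exact (isSuccLimit_add _ hW).succ_lt hζ.2)

theorem le_csSup_image_of_div_eq {W p : Ordinal} {C : Set Ordinal} {g : Ordinal → Ordinal}
    (hW0 : W ≠ 0) (hC : C.Nonempty) (hg : ∀ ζ ∈ C, g ζ / W = p)
    (hsup : W ≤ sSup ((g · % W) '' C)) : W * p + W ≤ sSup (g '' C) := by
  have himage : g '' C = (W * p + ·) '' ((g · % W) '' C) := by
    rw [image_image]
    exact image_congr fun ζ hζ => by rw [← hg ζ hζ, div_add_mod]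
  rw [himage, ← (isNormal_add_right _).map_sSup (hC.image _) ⟨W, ?_⟩]
  · exact add_le_add_right hsup _
  · rintro _ ⟨ζ, -, rfl⟩
    exact (mod_lt _ hW0).le

theorem le_sSup_mod_or_le_sSup_mod {W c : Ordinal} {C : Set Ordinal} {f₀ f₁ : Ordinal → Ordinal}
    (hW : IsPrincipal (· ♯ ·) W) (hW0 : W ≠ 0) (hf : ∀ ζ ∈ C, f₀ ζ ♯ f₁ ζ = ζ + 1)
    (hdiv : ∀ ζ ∈ C, (ζ + 1) / W = c) (hcof : ∀ b < W * c + W, ∃ ζ ∈ C, b ≤ ζ) :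
    W ≤ sSup ((f₀ · % W) '' C) ∨ W ≤ sSup ((f₁ · % W) '' C) := by
  by_contra! hlt
  have hbdd (f : Ordinal → Ordinal) : BddAbove ((f · % W) '' C) := by
    refine ⟨W, ?_⟩
    rintro _ ⟨ζ, -, rfl⟩
    exact (mod_lt _ hW0).le
  set u := sSup ((f₀ · % W) '' C) ♯ sSup ((f₁ · % W) '' C)
  obtain ⟨ζ, hζ, hle⟩ := hcof (W * c + u) (add_lt_add_right (hW hlt.1 hlt.2) _)
  have hmod : (ζ + 1) % W ≤ u := by
    rw [← hf ζ hζ, hW.nadd_mod hW0]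
    exact nadd_le_nadd (le_csSup (hbdd f₀) ⟨ζ, hζ, rfl⟩) (le_csSup (hbdd f₁) ⟨ζ, hζ, rfl⟩)
  refine (lt_add_one ζ).not_ge ?_
  calc ζ + 1 = W * c + (ζ + 1) % W := by rw [← hdiv ζ hζ, div_add_mod]
    _ ≤ W * c + u := add_le_add_right hmod _
    _ ≤ ζ := hle

theorem exists_nadd_eq_isLimit_le_sSup {W p₀ p₁ : Ordinal} {C : Set Ordinal}
    {g₀ g₁ : Ordinal → Ordinal} (hW : IsPrincipal (· ♯ ·) W) (hWlim : IsSuccLimit W)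
    (hC : C.Nonempty) (hg : ∀ ζ ∈ C, g₀ ζ / W = p₀ ∧ g₁ ζ / W = p₁)
    (hsup : W ≤ sSup ((g₀ · % W) '' C)) :
    ∃ ξ₀ ξ₁ : Ordinal, ξ₀ ♯ ξ₁ = W * (p₀ ♯ p₁) + W ∧
      ξ₀.IsLimit ∧ ξ₀ ≤ sSup (g₀ '' C) ∧ ∀ ζ ∈ C, ξ₁ ≤ g₁ ζ := by
  refine ⟨W * p₀ + W, W * p₁, ?_, isLimit_iff_isSuccLimit.2 (isSuccLimit_add _ hWlim),
    le_csSup_image_of_div_eq hWlim.ne_bot hC (fun ζ hζ => (hg ζ hζ).1) hsup,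
    fun ζ hζ => (hg ζ hζ).2 ▸ mul_div_le _ _⟩
  rw [← mul_add_one, hW.mul_nadd_mul hWlim.ne_bot, add_one_nadd, mul_add_one]

theorem exists_cofinal_subset_div_eq {W q : Ordinal} {f₀ f₁ : Ordinal → Ordinal}
    (hW : IsPrincipal (· ♯ ·) W) (hWlim : IsSuccLimit W)
    (hf : ∀ ζ < W * q + W, f₀ ζ ♯ f₁ ζ = ζ + 1) :
    ∃ C ⊆ Ico (W * q) (W * q + W), ∃ p₀ p₁ : Ordinal, p₀ ♯ p₁ = q ∧
      (∀ ζ ∈ C, f₀ ζ / W = p₀ ∧ f₁ ζ / W = p₁) ∧ ∀ b < W * q + W, ∃ ζ ∈ C, b ≤ ζ := by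
  set T := Ico (W * q) (W * q + W)
  have hT : MapsTo (fun ζ => (f₀ ζ / W, f₁ ζ / W)) T {x | x.1 ♯ x.2 = q} := fun ζ hζ => by
    rw [mem_ofPred_eq, ← hW.nadd_div hWlim.ne_bot, hf ζ hζ.2, add_one_div_eq_of_mem_Ico hWlim hζ]
  have hWq : W * q < W * q + W := lt_add_of_pos_right _ hWlim.bot_lt
  obtain ⟨⟨p₀, p₁⟩, hp, hcof⟩ := (finite_setOf_nadd_eq q).exists_cofinal_fiber hT
    ⟨W * q, left_mem_Ico.2 hWq⟩
    fun b hb => ⟨max b (W * q), ⟨le_max_right _ _, max_lt hb hWq⟩, le_max_left _ _⟩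
  refine ⟨{ζ ∈ T | (f₀ ζ / W, f₁ ζ / W) = (p₀, p₁)}, sep_subset _ _, p₀, p₁, hp,
    fun ζ hζ => Prod.ext_iff.1 hζ.2, fun b hb => ?_⟩
  obtain ⟨ζ, hζT, hζ, hbζ⟩ := hcof b hb
  exact ⟨ζ, ⟨hζT, hζ⟩, hbζ⟩

end Ordinal

/-- Proposition 3.7 of the paper, from [Causey]: a pigeonhole
principle for Hessenberg decompositions `ξ_{0,ζ} ⊕ ξ_{1,ζ} = ζ + 1` at a limit
ordinal `ξ`. -/
theorem statement15 (ξ : Ordinal) (hξ : ξ.IsLimit)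
    (f0 f1 : Ordinal → Ordinal)
    (h : ∀ ζ < ξ, f0 ζ ♯ f1 ζ = ζ + 1) :
    ∃ S : Set Ordinal, S ⊆ Set.Iio ξ ∧
      ∃ ξ₀ ξ₁ : Ordinal, ξ₀ ♯ ξ₁ = ξ ∧
        ((ξ₀.IsLimit ∧ ξ₀ ≤ sSup (f0 '' S) ∧ ∀ ζ ∈ S, ξ₁ ≤ f1 ζ) ∨
         (ξ₁.IsLimit ∧ ξ₁ ≤ sSup (f1 '' S) ∧ ∀ ζ ∈ S, ξ₀ ≤ f0 ζ)) := by
  obtain ⟨γ, q, hγ, rfl⟩ := exists_eq_omega0_opow_mul_add_self (isLimit_iff_isSuccLimit.1 hξ)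
  set W := ω ^ γ
  have hW := isPrincipal_nadd_omega0_opow γ
  have hWlim : IsSuccLimit W := isSuccLimit_opow_left isSuccLimit_omega0 hγ
  obtain ⟨C, hCT, p₀, p₁, hp, hC, hcof⟩ := exists_cofinal_subset_div_eq hW hWlim h
  have hCξ : C ⊆ Iio (W * q + W) := fun ζ hζ => (hCT hζ).2
  have hCne : C.Nonempty := let ⟨ζ, hζ, _⟩ := hcof 0 (hWlim.bot_lt.trans_le le_add_self); ⟨ζ, hζ⟩
  rcases le_sSup_mod_or_le_sSup_mod hW hWlim.ne_bot (fun ζ hζ => h ζ (hCξ hζ))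
    (fun ζ hζ => add_one_div_eq_of_mem_Ico hWlim (hCT hζ)) hcof with hsup | hsup
  · obtain ⟨ξ₀, ξ₁, hsum, hlim⟩ := exists_nadd_eq_isLimit_le_sSup hW hWlim hCne hC hsup
    exact ⟨C, hCξ, ξ₀, ξ₁, by rw [hsum, hp], Or.inl hlim⟩
  · obtain ⟨ξ₁, ξ₀, hsum, hlim⟩ :=
      exists_nadd_eq_isLimit_le_sSup hW hWlim hCne (fun ζ hζ => (hC ζ hζ).symm) hsup
    exact ⟨C, hCξ, ξ₀, ξ₁, by rw [nadd_comm, hsum, nadd_comm, hp], Or.inr hlim⟩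
end

section
/- Let X and Y be real Banach spaces and A : X → Y a bounded linear operator. Let (r_n) be a sequence of norms on Y for which there exists C ≥ 1 with C⁻¹‖y‖ ≤ r_n(y) ≤ C‖y‖ for all n and all y ∈ Y, and let (ε_n) be positive reals with Σ_n ε_n ≤ 1; set r = Σ_n ε_n r_n. If for every n the operator A : X → (Y, r_n) is asymptotically uniformly smooth (for every τ > 0 there exists σ₀ > 0 such that for every 0 < σ ≤ σ₀, every y with r_n(y) ≤ 1, and every weakly null net (x_λ) ⊆ B_X, limsup_λ r_n(y + σ A x_λ) ≤ 1 + στ), then A : X → (Y, r) is asymptotically uniformly smooth (the same condition with r in place of r_n). -/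
open Filter Topology Pointwise NormedSpace

noncomputable section

variable {X Y : Type*} [NormedAddCommGroup X] [NormedSpace ℝ X] [CompleteSpace X]
  [NormedAddCommGroup Y] [NormedSpace ℝ Y] [CompleteSpace Y]

/-- `r` is a norm on `E` that is `C`-equivalent to the original norm:
`C⁻¹‖u‖ ≤ r u ≤ C‖u‖`. -/
def IsEquivNorm {E : Type*} [NormedAddCommGroup E] [NormedSpace ℝ E]
    (C : ℝ) (r : E → ℝ) : Prop :=
  (∀ u v : E, r (u + v) ≤ r u + r v) ∧ (∀ (a : ℝ) (u : E), r (a • u) = |a| * r u) ∧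
    ∀ u : E, C⁻¹ * ‖u‖ ≤ r u ∧ r u ≤ C * ‖u‖


/-! Split `r = Σ ε_n r_n` into the terms `n < N` and a tail of total weight so small that,
moving by at most `σ C ‖A‖` in each `r_n`, it costs at most `στ/2`. For `n < N`, smoothness of
`r_n` is applied at the point `y / r_n(y)` with step `σ / r_n(y)`, which is admissible as long as
`r_n(y)` is not too small compared with `σ`; and when `‖y‖` is that small, every
`r_n(y + σ A x)` is at most `1` outright. -/

theorem limsup_le_of_forall_pos_eventually_le {ι : Type*} {l : Filter ι} [l.NeBot]
    {u : ι → ℝ} {m L : ℝ} (hm : ∀ i, m ≤ u i) (h : ∀ η > 0, ∀ᶠ i in l, u i ≤ L + η) : limsup u l ≤ L :=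
  le_of_forall_pos_le_add fun η hη => limsup_le_of_le (isCoboundedUnder_le_of_le l hm) (h η hη)

theorem tsum_mul_le_of_le_add_of_le_add {w f g : ℕ → ℝ} {N : ℕ} {a b : ℝ}
    (hw : ∀ n, 0 ≤ w n) (hws : Summable w) (hfs : Summable fun n => w n * f n)
    (hgs : Summable fun n => w n * g n)
    (head : ∀ n < N, f n ≤ g n + a) (tail : ∀ n ≥ N, f n ≤ g n + b) :
    ∑' n, w n * f n ≤
      ∑' n, w n * g n + (∑ n ∈ Finset.range N, w n) * a + (∑' k, w (k + N)) * b := by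
  have hhead : ∑ n ∈ Finset.range N, w n * f n ≤
      ∑ n ∈ Finset.range N, w n * g n + (∑ n ∈ Finset.range N, w n) * a := by
    rw [Finset.sum_mul, ← Finset.sum_add_distrib]
    refine Finset.sum_le_sum fun n hn => ?_
    rw [← mul_add]
    exact mul_le_mul_of_nonneg_left (head n (Finset.mem_range.1 hn)) (hw n)
  have htail : ∑' k, w (k + N) * f (k + N) ≤
      ∑' k, w (k + N) * g (k + N) + (∑' k, w (k + N)) * b := by
    have hgs' := (summable_nat_add_iff N).2 hgs
    have hws' := ((summable_nat_add_iff N).2 hws).mul_right b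
    rw [← tsum_mul_right, ← hgs'.tsum_add hws']
    refine ((summable_nat_add_iff N).2 hfs).tsum_le_tsum (fun k => ?_) (hgs'.add hws')
    rw [← mul_add]
    exact mul_le_mul_of_nonneg_left (tail _ (N.le_add_left k)) (hw _)
  rw [← hfs.sum_add_tsum_nat_add N, ← hgs.sum_add_tsum_nat_add N]
  linarith

namespace IsEquivNorm

variable {E F : Type*} [SeminormedAddCommGroup E] [NormedSpace ℝ E]
  [NormedAddCommGroup F] [NormedSpace ℝ F] {C : ℝ} {r : F → ℝ}

theorem nonneg (hr : IsEquivNorm C r) (u : F) : 0 ≤ r u := by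
  have h0 : r 0 = 0 := by simpa using hr.2.1 0 0
  have hneg : r (-u) = r u := by simpa using hr.2.1 (-1) u
  have := hr.1 u (-u)
  rw [add_neg_cancel, h0, hneg] at this
  linarith

theorem smul_of_nonneg (hr : IsEquivNorm C r) {a : ℝ} (ha : 0 ≤ a) (u : F) :
    r (a • u) = a * r u := by
  rw [hr.2.1, abs_of_nonneg ha]

theorem le_mul_norm (hr : IsEquivNorm C r) (u : F) : r u ≤ C * ‖u‖ := (hr.2.2 u).2

theorem inv_mul_norm_le (hr : IsEquivNorm C r) (u : F) : C⁻¹ * ‖u‖ ≤ r u := (hr.2.2 u).1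

theorem add_smul_apply_le (hr : IsEquivNorm C r) (hC : 0 ≤ C) (T : E →L[ℝ] F) (y : F)
    {σ : ℝ} (hσ : 0 ≤ σ) {x : E} (hx : ‖x‖ ≤ 1) :
    r (y + σ • T x) ≤ r y + σ * (C * ‖T‖) := by
  have hTx : r (T x) ≤ C * ‖T‖ :=
    (hr.le_mul_norm _).trans <| mul_le_mul_of_nonneg_left
      ((T.le_opNorm_of_le hx).trans_eq (mul_one _)) hC
  calc r (y + σ • T x) ≤ r y + r (σ • T x) := hr.1 _ _
    _ ≤ r y + σ * (C * ‖T‖) := by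
      rw [hr.smul_of_nonneg hσ]
      exact add_le_add_right (mul_le_mul_of_nonneg_left hTx hσ) _

variable {ι : Type*} {l : Filter ι} {T : E →L[ℝ] F} {x : ι → E} {s τ : ℝ}

theorem eventually_add_smul_apply_lt (hr : IsEquivNorm C r) (hC : 0 ≤ C)
    (hx : ∀ i, ‖x i‖ ≤ 1)
    (hs : ∀ σ, 0 < σ → σ ≤ s → ∀ y, r y ≤ 1 →
      limsup (fun i => r (y + σ • T (x i))) l ≤ 1 + σ * τ)
    {y : F} {σ : ℝ} (hσ : 0 < σ) (hσy : σ ≤ s * r y) {η : ℝ} (hη : 0 < η) :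
    ∀ᶠ i in l, r (y + σ • T (x i)) < r y + σ * τ + η := by
  have ht : 0 < r y := (hr.nonneg y).lt_of_ne' fun h => by
    rw [h, mul_zero] at hσy
    linarith
  set t := r y
  have hunit : r (t⁻¹ • y) ≤ 1 := by
    rw [hr.smul_of_nonneg (inv_nonneg.2 ht.le), inv_mul_cancel₀ ht.ne']
  have hscale : σ / t ≤ s := by rwa [div_le_iff₀ ht]
  have hlim := hs (σ / t) (div_pos hσ ht) hscale (t⁻¹ • y) hunit
  have hbdd : IsBoundedUnder (· ≤ ·) l fun i => r (t⁻¹ • y + (σ / t) • T (x i)) :=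
    isBoundedUnder_of ⟨_, fun i =>
      hr.add_smul_apply_le hC T (t⁻¹ • y) (div_pos hσ ht).le (hx i)⟩
  filter_upwards [eventually_lt_of_limsup_lt
    (hlim.trans_lt (lt_add_of_pos_right _ (div_pos hη ht))) hbdd] with i hi
  have hvec : y + σ • T (x i) = t • (t⁻¹ • y + (σ / t) • T (x i)) := by
    rw [smul_add, smul_smul, smul_smul, mul_inv_cancel₀ ht.ne', one_smul,
      mul_div_cancel₀ _ ht.ne']
  calc r (y + σ • T (x i)) = t * r (t⁻¹ • y + (σ / t) • T (x i)) := by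
        rw [hvec, hr.smul_of_nonneg ht.le]
    _ < t * (1 + σ / t * τ + η / t) := mul_lt_mul_of_pos_left hi ht
    _ = t + σ * τ + η := by field_simp

end IsEquivNorm

section Averaging

variable {E F : Type*} [SeminormedAddCommGroup E] [NormedSpace ℝ E]
  [NormedAddCommGroup F] [NormedSpace ℝ F]
  {C : ℝ} {r : ℕ → F → ℝ} {ε : ℕ → ℝ} {T : E →L[ℝ] F}

theorem summable_mul_of_isEquivNorm (hr : ∀ n, IsEquivNorm C (r n)) (hε : ∀ n, 0 ≤ ε n)
    (hεs : Summable ε) (u : F) : Summable fun n => ε n * r n u :=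
  Summable.of_nonneg_of_le (fun n => mul_nonneg (hε n) ((hr n).nonneg u))
    (fun n => mul_le_mul_of_nonneg_left ((hr n).le_mul_norm u) (hε n))
    (hεs.mul_right (C * ‖u‖))

theorem tsum_mul_of_isEquivNorm_nonneg (hr : ∀ n, IsEquivNorm C (r n)) (hε : ∀ n, 0 ≤ ε n)
    (u : F) : 0 ≤ ∑' n, ε n * r n u :=
  tsum_nonneg fun n => mul_nonneg (hε n) ((hr n).nonneg u)

variable (hr : ∀ n, IsEquivNorm C (r n)) (hε : ∀ n, 0 ≤ ε n) (hεs : Summable ε)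
  (hε1 : ∑' n, ε n ≤ 1)
include hr hε hεs hε1

theorem tsum_mul_add_smul_apply_le_one (hC : 0 ≤ C) {ρ σ : ℝ} (hσ : 0 ≤ σ)
    (hσρ : σ * (C * (ρ + ‖T‖)) ≤ 1) {y : F} (hy : ‖y‖ ≤ σ * ρ) {x : E} (hx : ‖x‖ ≤ 1) :
    ∑' n, ε n * r n (y + σ • T x) ≤ 1 := by
  have hle (n : ℕ) : r n (y + σ • T x) ≤ 1 := calc
    r n (y + σ • T x) ≤ r n y + σ * (C * ‖T‖) := (hr n).add_smul_apply_le hC T y hσ hx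
    _ ≤ C * (σ * ρ) + σ * (C * ‖T‖) := by
      gcongr
      exact ((hr n).le_mul_norm y).trans (mul_le_mul_of_nonneg_left hy hC)
    _ = σ * (C * (ρ + ‖T‖)) := by ring
    _ ≤ 1 := hσρ
  calc ∑' n, ε n * r n (y + σ • T x) ≤ ∑' n, ε n :=
        (summable_mul_of_isEquivNorm hr hε hεs _).tsum_le_tsum
          (fun n => mul_le_of_le_one_right (hε n) (hle n)) hεs
    _ ≤ 1 := hε1

variable {ι : Type*} {l : Filter ι} [l.NeBot] {x : ι → E} {N : ℕ} {s τ₁ τ₂ : ℝ}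

theorem limsup_tsum_mul_add_smul_apply_le_of_le_mul (hC : 0 ≤ C) (hx : ∀ i, ‖x i‖ ≤ 1)
    (hs : ∀ n < N, ∀ σ, 0 < σ → σ ≤ s → ∀ y, r n y ≤ 1 →
      limsup (fun i => r n (y + σ • T (x i))) l ≤ 1 + σ * τ₁)
    (hτ₁ : 0 ≤ τ₁) (hN : (∑' k, ε (k + N)) * (C * ‖T‖) ≤ τ₂)
    {y : F} (hy : ∑' n, ε n * r n y ≤ 1) {σ : ℝ} (hσ : 0 < σ)
    (hσy : ∀ n < N, σ ≤ s * r n y) :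
    limsup (fun i => ∑' n, ε n * r n (y + σ • T (x i))) l ≤ 1 + σ * (τ₁ + τ₂) := by
  refine limsup_le_of_forall_pos_eventually_le
    (fun i => tsum_mul_of_isEquivNorm_nonneg hr hε _) fun η hη => ?_
  have hhead : ∀ᶠ i in l, ∀ n ∈ Finset.range N,
      r n (y + σ • T (x i)) ≤ r n y + (σ * τ₁ + η) := by
    refine (eventually_all_finset _).2 fun n hn => ?_
    rw [Finset.mem_range] at hn
    filter_upwards [(hr n).eventually_add_smul_apply_lt hC hx (hs n hn) hσ (hσy n hn) hη]
      with i hi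
    linarith
  filter_upwards [hhead] with i hi
  have hεN : ∑ n ∈ Finset.range N, ε n ≤ 1 := (hεs.sum_le_tsum _ fun n _ => hε n).trans hε1
  have htail : (∑' k, ε (k + N)) * (σ * (C * ‖T‖)) ≤ σ * τ₂ := by
    rw [mul_left_comm]
    exact mul_le_mul_of_nonneg_left hN hσ.le
  have hheadWeight : (∑ n ∈ Finset.range N, ε n) * (σ * τ₁ + η) ≤ σ * τ₁ + η :=
    mul_le_of_le_one_left (by positivity) hεN
  calc ∑' n, ε n * r n (y + σ • T (x i))
      ≤ ∑' n, ε n * r n y + (∑ n ∈ Finset.range N, ε n) * (σ * τ₁ + η)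
          + (∑' k, ε (k + N)) * (σ * (C * ‖T‖)) :=
        tsum_mul_le_of_le_add_of_le_add hε hεs (summable_mul_of_isEquivNorm hr hε hεs _)
          (summable_mul_of_isEquivNorm hr hε hεs _) (fun n hn => hi n (Finset.mem_range.2 hn))
          fun n _ => (hr n).add_smul_apply_le hC T y hσ.le (hx i)
    _ ≤ 1 + σ * (τ₁ + τ₂) + η := by linarith

theorem limsup_tsum_mul_add_smul_apply_le (hC : 0 < C) (hx : ∀ i, ‖x i‖ ≤ 1) (hs₀ : 0 < s)
    (hs : ∀ n < N, ∀ σ, 0 < σ → σ ≤ s → ∀ y, r n y ≤ 1 →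
      limsup (fun i => r n (y + σ • T (x i))) l ≤ 1 + σ * τ₁)
    (hτ₁ : 0 ≤ τ₁) (hN : (∑' k, ε (k + N)) * (C * ‖T‖) ≤ τ₂)
    {y : F} (hy : ∑' n, ε n * r n y ≤ 1) {σ : ℝ} (hσ : 0 < σ)
    (hσs : σ * (C * (C / s + ‖T‖)) ≤ 1) :
    limsup (fun i => ∑' n, ε n * r n (y + σ • T (x i))) l ≤ 1 + σ * (τ₁ + τ₂) := by
  by_cases hys : ‖y‖ ≤ σ * (C / s)
  · have hτ₂ : 0 ≤ τ₂ := (mul_nonneg (tsum_nonneg fun k => hε _) (by positivity)).trans hN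
    have hcobdd := isCoboundedUnder_le_of_le l fun i => tsum_mul_of_isEquivNorm_nonneg hr hε
      (y + σ • T (x i))
    refine (limsup_le_of_le hcobdd (Eventually.of_forall fun i =>
      tsum_mul_add_smul_apply_le_one hr hε hεs hε1 hC.le hσ.le hσs hys (hx i))).trans ?_
    exact le_add_of_nonneg_right (mul_nonneg hσ.le (add_nonneg hτ₁ hτ₂))
  · refine limsup_tsum_mul_add_smul_apply_le_of_le_mul hr hε hεs hε1 hC.le hx hs hτ₁ hN hy hσ
      fun n _ => ?_
    calc σ = s * (C⁻¹ * (σ * (C / s))) := by field_simp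
      _ ≤ s * r n y := by
        gcongr
        exact (mul_le_mul_of_nonneg_left (not_le.1 hys).le (by positivity)).trans
          ((hr n).inv_mul_norm_le y)

end Averaging

/-- Proposition 5.6(i) of the paper, case ξ = 0: asymptotic uniform
smoothness of `A : X → (Y, r_n)` for each `n` passes to the averaged norm
`r = Σ_n ε_n r_n`. -/
theorem statement18 (A : X →L[ℝ] Y) (rn : ℕ → Y → ℝ) (C : ℝ) (hC : 1 ≤ C)
    (hrn : ∀ n, IsEquivNorm C (rn n))
    (ε : ℕ → ℝ) (hεpos : ∀ n, 0 < ε n) (hsum : Summable ε)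
    (hsum1 : (∑' n, ε n) ≤ 1)
    (hAUS : ∀ n : ℕ, ∀ τ : ℝ, 0 < τ → ∃ σ₀ : ℝ, 0 < σ₀ ∧ ∀ σ : ℝ, 0 < σ → σ ≤ σ₀ →
      ∀ y : Y, rn n y ≤ 1 →
        ∀ (ι : Type u) [Preorder ι] [IsDirected ι (· ≤ ·)] [Nonempty ι],
          ∀ x : ι → X, (∀ i, ‖x i‖ ≤ 1) →
            (∀ f : StrongDual ℝ X, Tendsto (fun i => f (x i)) atTop (𝓝 0)) →
            limsup (fun i => rn n (y + σ • A (x i))) atTop ≤ 1 + σ * τ) :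
    ∀ τ : ℝ, 0 < τ → ∃ σ₀ : ℝ, 0 < σ₀ ∧ ∀ σ : ℝ, 0 < σ → σ ≤ σ₀ →
      ∀ y : Y, (∑' n, ε n * rn n y) ≤ 1 →
        ∀ (ι : Type u) [Preorder ι] [IsDirected ι (· ≤ ·)] [Nonempty ι],
          ∀ x : ι → X, (∀ i, ‖x i‖ ≤ 1) →
            (∀ f : StrongDual ℝ X, Tendsto (fun i => f (x i)) atTop (𝓝 0)) →
            limsup (fun i => ∑' n, ε n * rn n (y + σ • A (x i))) atTop ≤ 1 + σ * τ := by
  intro τ hτ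
  have hC₀ : 0 < C := one_pos.trans_le hC
  obtain ⟨N, hN⟩ : ∃ N, (∑' k, ε (k + N)) * (C * ‖A‖) ≤ τ / 2 :=
    (((tendsto_sum_nat_add ε).mul_const (C * ‖A‖)).eventually
      (eventually_le_nhds (by rw [zero_mul]; exact half_pos hτ))).exists
  choose s hs₀ hs using fun n => hAUS n (τ / 2) (half_pos hτ)
  obtain ⟨t, hts, ht₀⟩ : ∃ t, (∀ n ∈ Finset.range N, t ≤ s n) ∧ 0 < t :=
    ((((eventually_all_finset _).2 fun n _ => eventually_le_nhds (hs₀ n)).filter_mono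
      nhdsWithin_le_nhds).and self_mem_nhdsWithin : ∀ᶠ t in 𝓝[>] (0 : ℝ), _).exists
  set K := C * (C / t + ‖A‖)
  refine ⟨1 / (K + 1), by positivity, fun σ hσ hσ₀ y hy ι _ _ _ x hx hx₀ => ?_⟩
  have hσK : σ * K ≤ 1 := by
    have := (le_div_iff₀ (by positivity)).1 hσ₀
    nlinarith
  rw [← add_halves τ]
  exact limsup_tsum_mul_add_smul_apply_le hrn (fun n => (hεpos n).le) hsum hsum1 hC₀ hx ht₀
    (fun n hn σ' hσ' hσ't y' hy' =>
      hs n σ' hσ' (hσ't.trans (hts n (Finset.mem_range.2 hn))) y' hy' ι x hx hx₀)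
    (half_pos hτ).le hN hy hσ hσK
end
end
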